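/- arXiv:math/0408144 — 7 statements merged into one kernel-verified Lean document; each statement's English description precedes it below -/
import Mathlib

section
/- Kraft–Chaitin Theorem: Let Q ≥ 2 and let n : ℕ → ℕ be a computable sequence of non-negative integers such that ∑_{i≥1} Q^{-n_i} ≤ 1. Then one can effectively construct a computable sequence of strings w_1, w_2, … over the alphabet X_Q such that |w_i|_Q = n_i for every i ≥ 1 and the sequence is prefix-free, i.e., for all i ≠ j the string w_i is not a prefix of w_j (in particular the w_i are pairwise distinct). -/
open scoped ENNReal

/-- Strings over a `Q`-letter alphabet `X_Q`. -/
abbrev Str (Q : ℕ) : Type := List (Fin Q)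

/-- A set of strings is prefix-free if no element is a proper prefix of another. -/
def PrefixFreeSet {Q : ℕ} (S : Set (Str Q)) : Prop :=
  ∀ x ∈ S, ∀ y ∈ S, x <+: y → x = y

/-- A self-delimiting machine: a partial computable function on `X_Q`-strings
whose domain (program set) is prefix-free. -/
structure SDMachine (Q : ℕ) where
  f : Str Q →. Str Q
  partrec : Partrec f
  prefixFree : PrefixFreeSet f.Dom

/-- Program-size complexity `H_T(x) = min {|y| : T(y) = x}`, with `min ∅ = ∞`. -/
noncomputable def Hm {Q : ℕ} (T : SDMachine Q) (x : Str Q) : ℕ∞ :=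
  sInf ((fun y : Str Q => (y.length : ℕ∞)) '' {y | x ∈ T.f y})

/-- `U` is a universal self-delimiting machine: for every self-delimiting machine `T`
there is a constant `ε > 0` with `H_U(x) ≤ H_T(x) + ε` for all `x`. -/
def IsUniversal {Q : ℕ} (U : SDMachine Q) : Prop :=
  ∀ T : SDMachine Q, ∃ ε : ℕ, 0 < ε ∧ ∀ x, Hm U x ≤ Hm T x + (ε : ℕ∞)

/-- δ-complexity `δ(x) = H(x) − |x|`.  (For a universal machine `U`, `Hm U x` is
always finite, so taking `toNat` is harmless.) -/
noncomputable def deltaC {Q : ℕ} (U : SDMachine Q) (x : Str Q) : ℤ :=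
  ((Hm U x).toNat : ℤ) - (x.length : ℤ)

/-- A set is computably enumerable if it is the domain of a partial computable function. -/
def CEset {α : Type} [Primcodable α] (S : Set α) : Prop :=
  ∃ f : α →. Unit, Partrec f ∧ f.Dom = S

/-- An immune set: infinite, but containing no infinite c.e. subset. -/
def Immune {α : Type} [Primcodable α] (S : Set α) : Prop :=
  S.Infinite ∧ ∀ A : Set α, A ⊆ S → CEset A → A.Finite

/-!
The codewords are allocated online. After `k` requests we keep a list of *holes*: pairwise
prefix-incomparable strings, sorted by decreasing length, whose cylinders are the part of the
`Q`-ary tree not yet used, so that their Kraft sum is `1 - ∑_{i<k} Q^{-nᵢ}`. Request `n_k` is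
served by the longest hole `z` with `|z| ≤ n_k`: the codeword is `z 0^{n_k-|z|}`, and `z` is
replaced by the strings `z 0^i a` with `i < n_k - |z|` and `a ≠ 0`. The holes stay sparse: those
longer than `t` have Kraft sum `< Q^{-t}`, for every `t`. Hence, if all holes were longer than
`n_k`, their sum would be `< Q^{-n_k}`, contradicting the Kraft inequality; so a suitable hole
always exists.
-/

namespace KraftChaitin

section Prefix

variable {α : Type*}

def Incomparable (x y : List α) : Prop := ¬ x <+: y ∧ ¬ y <+: x

theorem Incomparable.symm {x y : List α} (h : Incomparable x y) : Incomparable y x :=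
  ⟨h.2, h.1⟩

theorem Incomparable.of_prefix_right {x y y' : List α} (h : Incomparable x y) (hy : y <+: y') :
    Incomparable x y' :=
  ⟨fun hx => (List.prefix_or_prefix_of_prefix hx hy).elim h.1 h.2, fun hy' => h.2 (hy.trans hy')⟩

theorem incomparable_append_left_iff {z x y : List α} :
    Incomparable (z ++ x) (z ++ y) ↔ Incomparable x y := by
  simp only [Incomparable, List.prefix_append_right_inj]

variable {c a b : α}

theorem replicate_append_cons_inj {i j : ℕ} {s t : List α} (ha : a ≠ c) (hb : b ≠ c)
    (h : List.replicate i c ++ a :: s = List.replicate j c ++ b :: t) : i = j ∧ a = b := by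
  induction i generalizing j with
  | zero => cases j <;> simp_all [List.replicate_succ]
  | succ i ih => cases j <;> simp_all [List.replicate_succ]

theorem incomparable_replicate_append_singleton {i j : ℕ} (ha : a ≠ c) (hb : b ≠ c)
    (hne : (i, a) ≠ (j, b)) :
    Incomparable (List.replicate i c ++ [a]) (List.replicate j c ++ [b]) := by
  have eq_of_prefix : ∀ {i j : ℕ} {a b : α}, a ≠ c → b ≠ c →
      List.replicate i c ++ [a] <+: List.replicate j c ++ [b] → (i, a) = (j, b) := by
    rintro i j a b ha hb ⟨t, ht⟩
    obtain ⟨rfl, rfl⟩ := replicate_append_cons_inj ha hb (by simpa using ht)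
    rfl
  exact ⟨fun h => hne (eq_of_prefix ha hb h), fun h => hne (eq_of_prefix hb ha h).symm⟩

theorem incomparable_replicate_append_singleton_replicate {i d : ℕ} (ha : a ≠ c) (hid : i < d) :
    Incomparable (List.replicate i c ++ [a]) (List.replicate d c) := by
  refine ⟨fun h => ha (List.eq_of_mem_replicate (h.subset (by simp))), fun h => ha ?_⟩
  exact List.eq_of_mem_replicate (by rw [h.eq_of_length_le (by simp; omega)]; simp)

end Prefix

section KraftSum

variable {α : Type*} (Q : ℕ)

noncomputable def kraftSum (R : List (List α)) : ℝ :=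
  (R.map fun x => ((Q : ℝ) ^ x.length)⁻¹).sum

@[simp]
theorem kraftSum_nil : kraftSum Q ([] : List (List α)) = 0 := rfl

@[simp]
theorem kraftSum_cons (x : List α) (R : List (List α)) :
    kraftSum Q (x :: R) = ((Q : ℝ) ^ x.length)⁻¹ + kraftSum Q R := by
  simp [kraftSum]

@[simp]
theorem kraftSum_append (R R' : List (List α)) :
    kraftSum Q (R ++ R') = kraftSum Q R + kraftSum Q R' := by
  simp [kraftSum]

theorem kraftSum_nonneg (R : List (List α)) : 0 ≤ kraftSum Q R :=
  List.sum_nonneg fun _ hx => by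
    obtain ⟨x, -, rfl⟩ := List.mem_map.1 hx
    positivity

end KraftSum

section Pieces

variable {Q : ℕ} [NeZero Q]

variable (Q) in
def nonzeroLetters : List (Fin Q) := (List.finRange Q).erase 0

theorem mem_nonzeroLetters {a : Fin Q} : a ∈ nonzeroLetters Q ↔ a ≠ 0 := by
  simp [nonzeroLetters, (List.nodup_finRange Q).mem_erase_iff]

theorem nodup_nonzeroLetters : (nonzeroLetters Q).Nodup := (List.nodup_finRange Q).erase 0

theorem length_nonzeroLetters : (nonzeroLetters Q).length = Q - 1 := by
  simp [nonzeroLetters, List.length_erase_of_mem]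

/-- Together with `z ++ List.replicate d 0`, these strings cut the cylinder of `z` into
disjoint cylinders. -/
def pieces (z : Str Q) : ℕ → List (Str Q)
  | 0 => []
  | d + 1 => (nonzeroLetters Q).map (fun a => z ++ List.replicate d 0 ++ [a]) ++ pieces z d

theorem mem_pieces {z y : Str Q} {d : ℕ} :
    y ∈ pieces z d ↔ ∃ i < d, ∃ a ≠ 0, z ++ List.replicate i 0 ++ [a] = y := by
  induction d with
  | zero => simp [pieces]
  | succ d ih =>
    simp only [pieces, List.mem_append, List.mem_map, mem_nonzeroLetters, ih,
      Nat.lt_succ_iff_lt_or_eq, or_and_right, exists_or, exists_eq_left]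
    exact or_comm

theorem prefix_of_mem_pieces {z y : Str Q} {d : ℕ} (hy : y ∈ pieces z d) : z <+: y := by
  obtain ⟨i, -, a, -, rfl⟩ := mem_pieces.1 hy
  simp [List.append_assoc]

theorem length_of_mem_pieces {z y : Str Q} {d : ℕ} (hy : y ∈ pieces z d) :
    z.length < y.length ∧ y.length ≤ z.length + d := by
  obtain ⟨i, hi, a, -, rfl⟩ := mem_pieces.1 hy
  simp only [List.length_append, List.length_replicate, List.length_singleton]
  omega

theorem incomparable_append_replicate_append_singleton {z : Str Q} {i j : ℕ} {a b : Fin Q}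
    (ha : a ≠ 0) (hb : b ≠ 0) (hne : (i, a) ≠ (j, b)) :
    Incomparable (z ++ List.replicate i 0 ++ [a]) (z ++ List.replicate j 0 ++ [b]) := by
  simpa only [List.append_assoc, incomparable_append_left_iff] using
    incomparable_replicate_append_singleton ha hb hne

theorem pairwise_incomparable_pieces (z : Str Q) (d : ℕ) : (pieces z d).Pairwise Incomparable := by
  induction d with
  | zero => simp [pieces]
  | succ d ih =>
    refine List.pairwise_append.2 ⟨?_, ih, ?_⟩
    · refine List.pairwise_map.2 (nodup_nonzeroLetters.imp_of_mem fun ha hb hab => ?_)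
      exact incomparable_append_replicate_append_singleton (mem_nonzeroLetters.1 ha)
        (mem_nonzeroLetters.1 hb) (by simpa using hab)
    · simp only [List.mem_map, mem_nonzeroLetters]
      rintro _ ⟨a, ha, rfl⟩ y hy
      obtain ⟨i, hi, b, hb, rfl⟩ := mem_pieces.1 hy
      exact incomparable_append_replicate_append_singleton ha hb (by simp; omega)

theorem pairwise_length_ge_pieces (z : Str Q) (d : ℕ) :
    (pieces z d).Pairwise fun x y => y.length ≤ x.length := by
  induction d with
  | zero => simp [pieces]
  | succ d ih =>
    refine List.pairwise_append.2 ⟨?_, ih, ?_⟩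
    · exact List.pairwise_map.2 (List.Pairwise.imp (fun _ => by simp) nodup_nonzeroLetters)
    · simp only [List.mem_map]
      rintro _ ⟨a, -, rfl⟩ y hy
      have := (length_of_mem_pieces hy).2
      simp only [List.length_append, List.length_replicate, List.length_singleton]
      omega

theorem incomparable_append_replicate_of_mem_pieces {z y : Str Q} {d : ℕ} (hy : y ∈ pieces z d) :
    Incomparable (z ++ List.replicate d 0) y := by
  obtain ⟨i, hi, a, ha, rfl⟩ := mem_pieces.1 hy
  simpa only [List.append_assoc, incomparable_append_left_iff] using
    (incomparable_replicate_append_singleton_replicate ha hi).symm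

theorem kraftSum_map_nonzeroLetters (x : Str Q) :
    kraftSum Q ((nonzeroLetters Q).map fun a => x ++ [a]) =
      (Q - 1 : ℝ) * ((Q : ℝ) ^ (x.length + 1))⁻¹ := by
  simp [kraftSum, Function.comp_def, length_nonzeroLetters, NeZero.one_le]

theorem kraftSum_filter_pieces (z : Str Q) {d t : ℕ} (hzt : z.length ≤ t)
    (htd : t ≤ z.length + d) :
    kraftSum Q ((pieces z d).filter (t < ·.length)) + ((Q : ℝ) ^ (z.length + d))⁻¹ =
      ((Q : ℝ) ^ t)⁻¹ := by
  induction d with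
  | zero => simp [pieces, show t = z.length by omega]
  | succ d ih =>
    rcases htd.lt_or_eq with htd | rfl
    · have hrow : ((nonzeroLetters Q).map fun a => z ++ List.replicate d 0 ++ [a]).filter
          (t < ·.length) = (nonzeroLetters Q).map fun a => z ++ List.replicate d 0 ++ [a] :=
        List.filter_eq_self.2 (by simp; omega)
      rw [pieces, List.filter_append, hrow, kraftSum_append, kraftSum_map_nonzeroLetters,
        ← ih (by omega)]
      have hQ : (Q : ℝ) ≠ 0 := Nat.cast_ne_zero.2 (NeZero.ne Q)
      simp only [List.length_append, List.length_replicate, pow_succ, ← add_assoc]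
      field_simp
      ring
    · rw [List.filter_eq_nil_iff.2 fun y hy => by simpa using (length_of_mem_pieces hy).2]
      simp

theorem kraftSum_pieces (z : Str Q) (d : ℕ) :
    kraftSum Q (pieces z d) + ((Q : ℝ) ^ (z.length + d))⁻¹ = ((Q : ℝ) ^ z.length)⁻¹ := by
  have hall : (pieces z d).filter (z.length < ·.length) = pieces z d :=
    List.filter_eq_self.2 fun y hy => by simpa using (length_of_mem_pieces hy).1
  simpa [hall] using kraftSum_filter_pieces z le_rfl (Nat.le_add_right _ d)

end Pieces

section HoleList

variable {Q : ℕ}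

structure IsHoleList (R : List (Str Q)) : Prop where
  sorted : R.Pairwise fun x y => y.length ≤ x.length
  incomparable : R.Pairwise Incomparable
  sparse : ∀ t, kraftSum Q (R.filter (t < ·.length)) < ((Q : ℝ) ^ t)⁻¹

theorem IsHoleList.exists_length_le {R : List (Str Q)} {m : ℕ} (hR : IsHoleList R)
    (hm : ((Q : ℝ) ^ m)⁻¹ ≤ kraftSum Q R) : ∃ x ∈ R, x.length ≤ m := by
  by_contra! h
  have := hR.sparse m
  rw [List.filter_eq_self.2 (by simpa using h)] at this
  linarith

variable [NeZero Q]

theorem isHoleList_singleton_nil : IsHoleList [([] : Str Q)] where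
  sorted := by simp
  incomparable := by simp
  sparse t := by simp [NeZero.pos]

variable {A B : List (Str Q)} {z : Str Q} {d : ℕ}

theorem IsHoleList.sorted_refine (hR : IsHoleList (A ++ z :: B))
    (hA : ∀ x ∈ A, z.length + d < x.length) :
    (A ++ pieces z d ++ B).Pairwise fun x y => y.length ≤ x.length := by
  have := hR.sorted
  simp only [List.pairwise_append, List.pairwise_cons, List.mem_append, List.mem_cons] at this ⊢
  obtain ⟨hsA, ⟨hzB, hsB⟩, hAzB⟩ := this
  refine ⟨⟨hsA, pairwise_length_ge_pieces z d, fun x hx y hy => ?_⟩, hsB, ?_⟩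
  · exact ((length_of_mem_pieces hy).2.trans_lt (hA x hx)).le
  · rintro x (hx | hx) y hy
    · exact hAzB x hx y (Or.inr hy)
    · exact (hzB y hy).trans (length_of_mem_pieces hx).1.le

theorem IsHoleList.incomparable_refine (hR : IsHoleList (A ++ z :: B)) :
    (A ++ pieces z d ++ B).Pairwise Incomparable := by
  have := hR.incomparable
  simp only [List.pairwise_append, List.pairwise_cons, List.mem_append, List.mem_cons] at this ⊢
  obtain ⟨hiA, ⟨hzB, hiB⟩, hAzB⟩ := this
  refine ⟨⟨hiA, pairwise_incomparable_pieces z d,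
    fun x hx y hy => (hAzB x hx z (Or.inl rfl)).of_prefix_right (prefix_of_mem_pieces hy)⟩,
    hiB, ?_⟩
  rintro x (hx | hx) y hy
  · exact hAzB x hx y (Or.inr hy)
  · exact ((hzB y hy).symm.of_prefix_right (prefix_of_mem_pieces hx)).symm

theorem IsHoleList.sparse_refine (hR : IsHoleList (A ++ z :: B))
    (hA : ∀ x ∈ A, z.length + d < x.length) (t : ℕ) :
    kraftSum Q ((A ++ pieces z d ++ B).filter (t < ·.length)) < ((Q : ℝ) ^ t)⁻¹ := by
  have hB : ∀ y ∈ B, y.length ≤ z.length :=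
    (List.pairwise_cons.1 (List.pairwise_append.1 hR.sorted).2.1).1
  have hold := hR.sparse t
  simp only [List.filter_append, kraftSum_append] at hold ⊢
  rcases lt_or_ge t z.length with hzt | hzt
  · rw [List.filter_cons_of_pos (by simpa using hzt), kraftSum_cons] at hold
    rw [List.filter_eq_self (l := pieces z d).2 fun y hy => by
      simpa using hzt.trans (length_of_mem_pieces hy).1]
    have : 0 < ((Q : ℝ) ^ (z.length + d))⁻¹ := by simp [NeZero.pos]
    linarith [kraftSum_pieces z d]
  rcases lt_or_ge t (z.length + d) with htd | htd
  · have hAall : ∀ s ≤ z.length + d, A.filter (s < ·.length) = A := fun s hs =>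
      List.filter_eq_self.2 fun x hx => by simpa using hs.trans_lt (hA x hx)
    have hAlow := hR.sparse (z.length + d)
    simp only [List.filter_append, kraftSum_append, hAall _ le_rfl] at hAlow
    rw [hAall t htd.le, List.filter_eq_nil_iff (l := B).2 fun y hy => by
      simpa using (hB y hy).trans hzt]
    have hP := kraftSum_filter_pieces z hzt htd.le
    have := kraftSum_nonneg Q ((z :: B).filter (z.length + d < ·.length))
    rw [kraftSum_nil, add_zero]
    linarith
  · rw [List.filter_cons_of_neg (by simpa using hzt)] at hold
    rw [List.filter_eq_nil_iff (l := pieces z d).2 fun y hy => by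
      simpa using (length_of_mem_pieces hy).2.trans htd]
    simpa using hold

end HoleList

section Allocation

variable {Q : ℕ} [NeZero Q]

/-- On a list sorted by decreasing length, the first hole of length `≤ m` is the longest one.
The value on `[]` is never used. -/
def allocate : List (Str Q) → ℕ → Str Q × List (Str Q)
  | [], _ => ([], [])
  | z :: R, m =>
    if m < z.length then ((allocate R m).1, z :: (allocate R m).2)
    else (z ++ List.replicate (m - z.length) 0, pieces z (m - z.length) ++ R)

theorem exists_allocate_eq {R : List (Str Q)} {m : ℕ} (h : ∃ x ∈ R, x.length ≤ m) :
    ∃ A z B d, R = A ++ z :: B ∧ (∀ x ∈ A, m < x.length) ∧ m = z.length + d ∧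
      allocate R m = (z ++ List.replicate d 0, A ++ pieces z d ++ B) := by
  induction R with
  | nil => simp at h
  | cons x R ih =>
    by_cases hx : m < x.length
    · obtain ⟨A, z, B, d, rfl, hA, hm, he⟩ := ih (by simpa [hx.not_ge] using h)
      exact ⟨x :: A, z, B, d, rfl, List.forall_mem_cons.2 ⟨hx, hA⟩, hm,
        by simp [allocate, hx, he]⟩
    · exact ⟨[], x, R, m - x.length, rfl, by simp, by omega, by simp [allocate, hx]⟩

variable {R : List (Str Q)} {m : ℕ}

theorem length_allocate_fst (hR : IsHoleList R) (hm : ((Q : ℝ) ^ m)⁻¹ ≤ kraftSum Q R) :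
    (allocate R m).1.length = m := by
  obtain ⟨A, z, B, d, rfl, -, rfl, he⟩ := exists_allocate_eq (hR.exists_length_le hm)
  simp [he]

theorem exists_prefix_allocate_fst (hR : IsHoleList R) (hm : ((Q : ℝ) ^ m)⁻¹ ≤ kraftSum Q R) :
    ∃ z ∈ R, z <+: (allocate R m).1 := by
  obtain ⟨A, z, B, d, rfl, -, rfl, he⟩ := exists_allocate_eq (hR.exists_length_le hm)
  exact ⟨z, by simp, by simp [he]⟩

theorem exists_prefix_of_mem_allocate_snd (hR : IsHoleList R)
    (hm : ((Q : ℝ) ^ m)⁻¹ ≤ kraftSum Q R) {y : Str Q} (hy : y ∈ (allocate R m).2) :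
    ∃ z ∈ R, z <+: y := by
  obtain ⟨A, z, B, d, rfl, -, rfl, he⟩ := exists_allocate_eq (hR.exists_length_le hm)
  simp only [he, List.mem_append] at hy
  rcases hy with (hy | hy) | hy
  · exact ⟨y, by simp [hy], List.prefix_refl y⟩
  · exact ⟨z, by simp, prefix_of_mem_pieces hy⟩
  · exact ⟨y, by simp [hy], List.prefix_refl y⟩

theorem IsHoleList.allocate (hR : IsHoleList R) (hm : ((Q : ℝ) ^ m)⁻¹ ≤ kraftSum Q R) :
    IsHoleList (allocate R m).2 := by
  obtain ⟨A, z, B, d, rfl, hA, rfl, he⟩ := exists_allocate_eq (hR.exists_length_le hm)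
  rw [he]
  exact ⟨hR.sorted_refine hA, hR.incomparable_refine, hR.sparse_refine hA⟩

theorem kraftSum_allocate_snd (hR : IsHoleList R) (hm : ((Q : ℝ) ^ m)⁻¹ ≤ kraftSum Q R) :
    kraftSum Q (allocate R m).2 + ((Q : ℝ) ^ m)⁻¹ = kraftSum Q R := by
  obtain ⟨A, z, B, d, rfl, -, rfl, he⟩ := exists_allocate_eq (hR.exists_length_le hm)
  have := kraftSum_pieces z d
  simp only [he, kraftSum_append, kraftSum_cons]
  linarith

theorem incomparable_allocate (hR : IsHoleList R) (hm : ((Q : ℝ) ^ m)⁻¹ ≤ kraftSum Q R) :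
    ∀ y ∈ (allocate R m).2, Incomparable (allocate R m).1 y := by
  obtain ⟨A, z, B, d, rfl, -, rfl, he⟩ := exists_allocate_eq (hR.exists_length_le hm)
  have hinc := List.pairwise_append.1 hR.incomparable
  have hzA : ∀ y ∈ A, Incomparable y z := fun y hy => hinc.2.2 y hy z (by simp)
  have hzB : ∀ y ∈ B, Incomparable z y := (List.pairwise_cons.1 hinc.2.1).1
  have hpad : z <+: z ++ List.replicate d 0 := List.prefix_append z _
  simp only [he, List.mem_append]
  rintro y ((hy | hy) | hy)
  · exact ((hzA y hy).of_prefix_right hpad).symm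
  · exact incomparable_append_replicate_of_mem_pieces hy
  · exact ((hzB y hy).symm.of_prefix_right hpad).symm

end Allocation

section Construction

variable (Q : ℕ) [NeZero Q]

def holes (n : ℕ → ℕ) : ℕ → List (Str Q)
  | 0 => [[]]
  | k + 1 => (allocate (holes n k) (n k)).2

def codeword (n : ℕ → ℕ) (k : ℕ) : Str Q := (allocate (holes Q n k) (n k)).1

variable {Q} {n : ℕ → ℕ} (hn : ∀ k, ∑ i ∈ Finset.range k, ((Q : ℝ) ^ n i)⁻¹ ≤ 1)
include hn

theorem isHoleList_holes (k : ℕ) :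
    IsHoleList (holes Q n k) ∧
      kraftSum Q (holes Q n k) + ∑ i ∈ Finset.range k, ((Q : ℝ) ^ n i)⁻¹ = 1 := by
  induction k with
  | zero => exact ⟨isHoleList_singleton_nil, by simp [holes]⟩
  | succ k ih =>
    have hm : ((Q : ℝ) ^ n k)⁻¹ ≤ kraftSum Q (holes Q n k) := by
      linarith [hn (k + 1), Finset.sum_range_succ (fun i => ((Q : ℝ) ^ n i)⁻¹) k]
    refine ⟨ih.1.allocate hm, ?_⟩
    rw [holes, Finset.sum_range_succ]
    linarith [kraftSum_allocate_snd ih.1 hm]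

theorem inv_pow_le_kraftSum_holes (k : ℕ) : ((Q : ℝ) ^ n k)⁻¹ ≤ kraftSum Q (holes Q n k) := by
  linarith [hn (k + 1), Finset.sum_range_succ (fun i => ((Q : ℝ) ^ n i)⁻¹) k,
    (isHoleList_holes hn k).2]

theorem length_codeword (k : ℕ) : (codeword Q n k).length = n k :=
  length_allocate_fst (isHoleList_holes hn k).1 (inv_pow_le_kraftSum_holes hn k)

theorem incomparable_codeword_of_mem_holes {i k : ℕ} (hik : i < k) {y : Str Q}
    (hy : y ∈ holes Q n k) : Incomparable (codeword Q n i) y := by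
  induction k generalizing y with
  | zero => omega
  | succ k ih =>
    have hR := (isHoleList_holes hn k).1
    have hm := inv_pow_le_kraftSum_holes hn k
    rcases Nat.lt_succ_iff_lt_or_eq.1 hik with hik | rfl
    · obtain ⟨x, hx, hxy⟩ := exists_prefix_of_mem_allocate_snd hR hm hy
      exact (ih hik hx).of_prefix_right hxy
    · exact incomparable_allocate hR hm y hy

theorem incomparable_codeword {i j : ℕ} (hij : i < j) :
    Incomparable (codeword Q n i) (codeword Q n j) := by
  obtain ⟨z, hz, hzw⟩ :=
    exists_prefix_allocate_fst (isHoleList_holes hn j).1 (inv_pow_le_kraftSum_holes hn j)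
  exact (incomparable_codeword_of_mem_holes hn hij hz).of_prefix_right hzw

theorem incomparable_codeword_of_ne {i j : ℕ} (hij : i ≠ j) :
    Incomparable (codeword Q n i) (codeword Q n j) := by
  rcases hij.lt_or_gt with h | h
  · exact incomparable_codeword hn h
  · exact (incomparable_codeword hn h).symm

end Construction

theorem primrec_replicate {α : Type*} [Primcodable α] :
    Primrec₂ (List.replicate : ℕ → α → List α) :=
  (Primrec.list_map (Primrec.list_range.comp Primrec.fst)
    (Primrec.snd.comp Primrec.fst).to₂).to₂.of_eq fun i a => by
    simp [List.map_const']

section Computability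

variable {Q : ℕ} [NeZero Q]

theorem primrec₂_pieces : Primrec₂ (pieces : Str Q → ℕ → List (Str Q)) := by
  have hrow : Primrec₂ fun (z : Str Q) (p : ℕ × List (Str Q)) =>
      (nonzeroLetters Q).map (fun a => z ++ List.replicate p.1 0 ++ [a]) ++ p.2 :=
    Primrec.list_append.comp
      (Primrec.list_map (Primrec.const _)
        (Primrec.list_concat.comp
          (Primrec.list_append.comp (Primrec.fst.comp Primrec.fst)
            (primrec_replicate.comp (Primrec.fst.comp (Primrec.snd.comp Primrec.fst))
              (Primrec.const 0)))
          Primrec.snd).to₂)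
      (Primrec.snd.comp Primrec.snd)
  exact (Primrec.nat_rec (Primrec.const []) hrow).of_eq fun z d => by
    induction d <;> simp_all [pieces]

theorem primrec₂_allocate : Primrec₂ (allocate : List (Str Q) → ℕ → Str Q × List (Str Q)) := by
  have hstep : Primrec₂ fun (a : List (Str Q) × ℕ)
      (p : Str Q × List (Str Q) × (Str Q × List (Str Q))) =>
      if a.2 < p.1.length then (p.2.2.1, p.1 :: p.2.2.2)
      else (p.1 ++ List.replicate (a.2 - p.1.length) 0,
        pieces p.1 (a.2 - p.1.length) ++ p.2.1) := by
    let T := (List (Str Q) × ℕ) × (Str Q × List (Str Q) × (Str Q × List (Str Q)))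
    have hm : Primrec fun q : T => q.1.2 := Primrec.snd.comp Primrec.fst
    have hz : Primrec fun q : T => q.2.1 := Primrec.fst.comp Primrec.snd
    have hB : Primrec fun q : T => q.2.2.1 := Primrec.fst.comp (Primrec.snd.comp Primrec.snd)
    have hih : Primrec fun q : T => q.2.2.2 := Primrec.snd.comp (Primrec.snd.comp Primrec.snd)
    have hd := Primrec.nat_sub.comp hm (Primrec.list_length.comp hz)
    exact Primrec.ite (Primrec.nat_lt.comp hm (Primrec.list_length.comp hz))
      (Primrec.pair (Primrec.fst.comp hih) (Primrec.list_cons.comp hz (Primrec.snd.comp hih)))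
      (Primrec.pair (Primrec.list_append.comp hz (primrec_replicate.comp hd (Primrec.const 0)))
        (Primrec.list_append.comp (primrec₂_pieces.comp hz hd) hB))
  exact (Primrec.list_rec Primrec.fst (Primrec.const ([], [])) hstep).to₂.of_eq fun R m => by
    induction R <;> simp_all [allocate]

theorem computable_codeword {n : ℕ → ℕ} (hn : Computable n) : Computable (codeword Q n) := by
  have hholes : Computable (holes Q n) :=
    (Computable.nat_rec Computable.id (Computable.const [[]])
      (Computable.snd.comp (primrec₂_allocate.to_comp.comp (Computable.snd.comp Computable.snd)
        (hn.comp (Computable.fst.comp Computable.snd)))).to₂).of_eq fun k => by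
      induction k <;> simp_all [holes]
  exact Computable.fst.comp (primrec₂_allocate.to_comp.comp hholes hn)

end Computability

theorem sum_range_inv_pow_le_one {Q : ℕ} (hQ : Q ≠ 0) {n : ℕ → ℕ}
    (hkraft : ∑' i, ((Q : ℝ≥0∞) ^ n i)⁻¹ ≤ 1) (k : ℕ) :
    ∑ i ∈ Finset.range k, ((Q : ℝ) ^ n i)⁻¹ ≤ 1 := by
  have hfin : ∀ i ∈ Finset.range k, ((Q : ℝ≥0∞) ^ n i)⁻¹ ≠ ⊤ := fun i _ => by simp [hQ]
  have := ENNReal.toReal_mono ENNReal.one_ne_top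
    ((ENNReal.sum_le_tsum (Finset.range k)).trans hkraft)
  simpa [ENNReal.toReal_sum hfin] using this

end KraftChaitin

/-- **Kraft–Chaitin Theorem.** Given `Q ≥ 2` and a computable sequence `n` of
non-negative integers with `∑ᵢ Q^{-nᵢ} ≤ 1`, one can effectively construct a computable
prefix-free sequence of strings `w` over `X_Q` with `|wᵢ| = nᵢ` for every `i`
(in particular the `wᵢ` are pairwise distinct). -/
theorem kraft_chaitin (Q : ℕ) (hQ : 2 ≤ Q) (n : ℕ → ℕ) (hn : Computable n)
    (hkraft : ∑' i : ℕ, ((Q : ℝ≥0∞) ^ (n i))⁻¹ ≤ 1) :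
    ∃ w : ℕ → Str Q, Computable w ∧ (∀ i, (w i).length = n i) ∧
      (∀ i j, i ≠ j → ¬ w i <+: w j) ∧ Function.Injective w := by
  have : NeZero Q := ⟨by omega⟩
  have hsum := KraftChaitin.sum_range_inv_pow_le_one (NeZero.ne Q) hkraft
  refine ⟨KraftChaitin.codeword Q n, KraftChaitin.computable_codeword hn,
    KraftChaitin.length_codeword hsum,
    fun i j hij => (KraftChaitin.incomparable_codeword_of_ne hsum hij).1, fun i j hij => ?_⟩
  by_contra hne
  exact (KraftChaitin.incomparable_codeword_of_ne hsum hne).1 (hij ▸ List.prefix_refl _)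
end

section
/- For every t ≥ 0, the set C_{Q,t} = {x ∈ X_Q* : δ_Q(x) > -t} is immune, that is, C_{Q,t} is infinite and contains no infinite computably enumerable subset. -/
open scoped ENNReal

/-!
Infinitude is a counting argument: if every word of length `n` or `n + 1` had a program of
length `≤ n + 1`, these programs would be pairwise distinct and form a prefix-free set, and
padding shows that such a set is no larger than the set of words of length `n + 1`. So some word
of length `≥ n` has `H_Q(x) > |x|`, i.e. `δ_Q(x) > 0`.

If `A ⊆ C_{Q,t}` were c.e. and infinite, a machine could send the program `0^k 1` to an element
of `A` of length `≥ 2k` found by dovetailing an enumeration of `A`. By universality such a word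
has `H_Q(x) ≤ k + c`, hence `δ_Q(x) ≤ c - k`, which is `≤ -t` for `k = c + t`.
-/

theorem Set.infinite_iff_forall_exists_le_length {α : Type*} [Finite α] {S : Set (List α)} :
    S.Infinite ↔ ∀ n, ∃ x ∈ S, n ≤ x.length := by
  refine ⟨fun hS n => ?_, fun h => ?_⟩
  · obtain ⟨x, hxS, hx⟩ := (hS.sdiff (List.finite_length_lt α n)).nonempty
    exact ⟨x, hxS, not_lt.1 hx⟩
  · refine Set.Infinite.of_image List.length (Set.infinite_of_not_bddAbove fun ⟨N, hN⟩ => ?_)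
    obtain ⟨x, hxS, hx⟩ := h (N + 1)
    have := hN ⟨x, hxS, rfl⟩
    omega

section Complexity

variable {Q : ℕ}

theorem hm_le_of_mem {T : SDMachine Q} {x p : Str Q} (h : x ∈ T.f p) : Hm T x ≤ p.length :=
  sInf_le ⟨p, h, rfl⟩

theorem exists_mem_of_hm_le {T : SDMachine Q} {x : Str Q} {m : ℕ} (h : Hm T x ≤ m) :
    ∃ p, x ∈ T.f p ∧ p.length ≤ m := by
  have hne : ((fun y : Str Q => (y.length : ℕ∞)) '' {y | x ∈ T.f y}).Nonempty := by
    by_contra hempty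
    rw [Set.not_nonempty_iff_eq_empty] at hempty
    simp [Hm, hempty] at h
  obtain ⟨p, hp, hlen⟩ := csInf_mem hne
  exact ⟨p, hp, Nat.cast_le.1 (hlen.trans_le h)⟩

theorem deltaC_le_of_hm_le {U : SDMachine Q} {x : Str Q} {n : ℕ} (h : Hm U x ≤ n) :
    deltaC U x ≤ n - x.length := by
  have := ENat.toNat_le_of_le_natCast h
  unfold deltaC
  omega

theorem deltaC_pos_of_length_lt_hm {U : SDMachine Q} {x : Str Q} (hfin : Hm U x ≠ ⊤)
    (h : (x.length : ℕ∞) < Hm U x) : 0 < deltaC U x := by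
  rw [← ENat.natCast_toNat hfin, Nat.cast_lt] at h
  unfold deltaC
  omega

theorem PrefixFreeSet.ncard_le_ncard_length_eq (hQ : 0 < Q) {S : Set (Str Q)}
    (hS : PrefixFreeSet S) {m : ℕ} (hm : ∀ p ∈ S, p.length ≤ m) :
    S.ncard ≤ {x : Str Q | x.length = m}.ncard := by
  let pad (p : Str Q) : Str Q := p ++ List.replicate (m - p.length) ⟨0, hQ⟩
  have hmaps : Set.MapsTo pad S {x | x.length = m} := fun p hp => by
    simp only [Set.mem_ofPred_eq, pad, List.length_append, List.length_replicate]
    have := hm p hp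
    omega
  have hinj : Set.InjOn pad S := fun p hp q hq hpq => by
    have hqp : q <+: pad p := by rw [hpq]; exact List.prefix_append q _
    rcases List.prefix_or_prefix_of_prefix (List.prefix_append p _) hqp with h | h
    · exact hS p hp q hq h
    · exact (hS q hq p hp h).symm
  exact Set.ncard_le_ncard_of_injOn pad hmaps hinj (List.finite_length_eq _ m)

theorem exists_length_lt_hm (hQ : 0 < Q) (T : SDMachine Q) (n : ℕ) :
    ∃ x : Str Q, n ≤ x.length ∧ (x.length : ℕ∞) < Hm T x := by
  by_contra! hcompr
  let L : Set (Str Q) := {x | x.length = n ∨ x.length = n + 1}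
  have hprog : ∀ x ∈ L, ∃ p, x ∈ T.f p ∧ p.length ≤ n + 1 := fun x hx =>
    exists_mem_of_hm_le <| (hcompr x (by rcases hx with h | h <;> omega)).trans
      (by rcases hx with h | h <;> simp [h])
  choose! prog hprog_mem hprog_len using hprog
  have hinj : Set.InjOn prog L := fun x hx y hy hxy =>
    Part.mem_unique (hprog_mem x hx) (hxy ▸ hprog_mem y hy)
  have hpf : PrefixFreeSet (prog '' L) := by
    rintro _ ⟨x, hx, rfl⟩ _ ⟨y, hy, rfl⟩ hxy
    exact T.prefixFree _ (Part.dom_iff_mem.2 ⟨x, hprog_mem x hx⟩) _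
      (Part.dom_iff_mem.2 ⟨y, hprog_mem y hy⟩) hxy
  have hle := hpf.ncard_le_ncard_length_eq hQ (m := n + 1) (by
    rintro _ ⟨x, hx, rfl⟩
    exact hprog_len x hx)
  have hlt : {x : Str Q | x.length = n + 1}.ncard < L.ncard := by
    refine Set.ncard_lt_ncard ⟨fun x hx => Or.inr hx, fun hsub => ?_⟩
      ((List.finite_length_eq _ n).union (List.finite_length_eq _ (n + 1)))
    have := hsub (show List.replicate n (⟨0, hQ⟩ : Fin Q) ∈ L from Or.inl (by simp))
    simp at this
  rw [hinj.ncard_image] at hle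
  omega

def unaryCode (z o : Fin Q) (k : ℕ) : Str Q := List.replicate k z ++ [o]

theorem length_unaryCode (z o : Fin Q) (k : ℕ) : (unaryCode z o k).length = k + 1 := by
  simp [unaryCode]

theorem primrec_unaryCode (z o : Fin Q) : Primrec (unaryCode z o) :=
  (Primrec.list_append.comp (Primrec.list_map Primrec.list_range (Primrec.const z).to₂)
    (Primrec.const [o])).of_eq fun k => by simp [unaryCode, List.map_const']

theorem eq_of_unaryCode_prefix {z o : Fin Q} (hzo : z ≠ o) {j k : ℕ}
    (h : unaryCode z o j <+: unaryCode z o k) : j = k := by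
  have hjk : j ≤ k := by simpa [length_unaryCode] using h.length_le
  by_contra hne
  have htake := List.prefix_iff_eq_take.1 h
  rw [length_unaryCode] at htake
  simp only [unaryCode] at htake
  rw [List.take_append_of_le_length (by simp; omega), List.take_replicate,
    min_eq_left (by omega)] at htake
  have ho : o ∈ List.replicate (j + 1) z :=
    htake ▸ List.mem_append_right _ (List.mem_singleton_self o)
  exact hzo (List.eq_of_mem_replicate ho).symm

theorem exists_sdMachine_hm_le_succ (hQ : 2 ≤ Q) {f : ℕ →. Str Q} (hf : Partrec f) :
    ∃ T : SDMachine Q, ∀ k, ∀ x ∈ f k, Hm T x ≤ k + 1 := by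
  let z : Fin Q := ⟨0, by omega⟩
  let o : Fin Q := ⟨1, hQ⟩
  have hzo : z ≠ o := by simp [z, o, Fin.ext_iff]
  let decodeUnary (y : Str Q) : ℕ := y.length - 1
  let run : Str Q →. Str Q := fun y =>
    bif decide (y = unaryCode z o (decodeUnary y)) then f (decodeUnary y) else Part.none
  have hdecode : Primrec decodeUnary := Primrec.pred.comp Primrec.list_length
  have hrun : Partrec run :=
    Partrec.cond (Primrec.eq.decide.comp Primrec.id ((primrec_unaryCode z o).comp hdecode)).to_comp
      (hf.comp hdecode.to_comp) Partrec.none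
  have hdom : ∀ y ∈ run.Dom, y = unaryCode z o (decodeUnary y) := fun y hy => by
    by_contra hne
    simp [run, hne] at hy
  have hpf : PrefixFreeSet run.Dom := fun a ha b hb hab => by
    rw [hdom a ha, hdom b hb] at hab ⊢
    rw [eq_of_unaryCode_prefix hzo hab]
  refine ⟨⟨run, hrun, hpf⟩, fun k x hx => ?_⟩
  have hdecode_code : decodeUnary (unaryCode z o k) = k := by simp [decodeUnary, length_unaryCode]
  have hmem : x ∈ run (unaryCode z o k) := by simpa [run, hdecode_code] using hx
  simpa [length_unaryCode] using hm_le_of_mem (T := ⟨run, hrun, hpf⟩) hmem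

namespace IsUniversal

variable {U : SDMachine Q}

theorem exists_hm_le_add (hQ : 2 ≤ Q) (hU : IsUniversal U) {f : ℕ →. Str Q} (hf : Partrec f) :
    ∃ c : ℕ, ∀ k, ∀ x ∈ f k, Hm U x ≤ k + c := by
  obtain ⟨T, hT⟩ := exists_sdMachine_hm_le_succ hQ hf
  obtain ⟨ε, -, hε⟩ := hU T
  refine ⟨1 + ε, fun k x hx => ?_⟩
  calc Hm U x ≤ Hm T x + ε := hε x
    _ ≤ k + 1 + ε := by gcongr; exact hT k x hx
    _ = k + (1 + ε : ℕ) := by push_cast; ring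

theorem hm_ne_top (hQ : 2 ≤ Q) (hU : IsUniversal U) (x : Str Q) : Hm U x ≠ ⊤ := by
  obtain ⟨c, hc⟩ := hU.exists_hm_le_add hQ (Computable.decode (α := Str Q)).ofOption
  exact ne_top_of_le_ne_top (by simp) (hc (Encodable.encode x) x (by simp))

end IsUniversal

end Complexity

section Dovetailing

open Nat.Partrec (Code)
open Nat.Partrec.Code Encodable

variable {α β : Type} [Primcodable α]

/-- Stage `m = ⟨s, n⟩` returns the element decoded from `n` when the code `c` halts on `n`
within `s` steps and the element passes the test `p b`. -/
def dovetailSelect (c : Code) (p : β → α → Bool) (b : β) (m : ℕ) : Option α :=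
  (evaln m.unpair.1 c m.unpair.2).bind fun _ =>
    (decode m.unpair.2).bind fun a => bif p b a then some a else none

theorem computable₂_dovetailSelect [Primcodable β] (c : Code) {p : β → α → Bool}
    (hp : Computable₂ p) :
    Computable₂ (dovetailSelect c p) := by
  have hunpair : Computable fun bm : β × ℕ => bm.2.unpair :=
    Primrec.unpair.to_comp.comp Computable.snd
  have heval : Computable fun bm : β × ℕ => evaln bm.2.unpair.1 c bm.2.unpair.2 :=
    primrec_evaln.to_comp.comp (((Computable.fst.comp hunpair).pair (Computable.const c)).pair
      (Computable.snd.comp hunpair))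
  have hdecode : Computable fun bm : β × ℕ => (decode bm.2.unpair.2 : Option α) :=
    Computable.decode.comp (Computable.snd.comp hunpair)
  have hfilter :
      Computable₂ fun (bm : β × ℕ) (a : α) => bif p bm.1 a then some a else none :=
    (Computable.cond (hp.comp (Computable.fst.comp Computable.fst) Computable.snd)
      (Computable.option_some.comp Computable.snd) (Computable.const none)).to₂
  exact (heval.option_bind ((hdecode.option_bind hfilter).comp Computable.fst).to₂).to₂

variable {f : α →. Unit} {c : Code}

theorem dovetailSelect_sound
    (hc : eval c = fun n => Part.bind (decode (α := α) n) fun a => (f a).map encode)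
    {p : β → α → Bool} {b : β} {m : ℕ} {a : α} (h : dovetailSelect c p b m = some a) :
    (f a).Dom ∧ p b a = true := by
  simp only [dovetailSelect, Option.bind_eq_some_iff] at h
  obtain ⟨e, hev, a', hdec, hsel⟩ := h
  cases hpa : p b a' <;> simp only [hpa, cond_false, cond_true, reduceCtorEq,
    Option.some_inj] at hsel
  subst hsel
  have heval := evaln_sound hev
  simp only [hc, hdec, Part.coe_some, Part.bind_some] at heval
  obtain ⟨u, hu, -⟩ := (Part.mem_map_iff _).1 heval
  exact ⟨Part.dom_iff_mem.2 ⟨u, hu⟩, hpa⟩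

theorem exists_dovetailSelect_eq_some
    (hc : eval c = fun n => Part.bind (decode (α := α) n) fun a => (f a).map encode)
    {p : β → α → Bool} {b : β} {a : α} (ha : (f a).Dom) (hpa : p b a = true) :
    ∃ m, dovetailSelect c p b m = some a := by
  have heval : encode ((f a).get ha) ∈ eval c (encode a) := by
    simpa [hc, encodek] using Part.dom_iff_mem.1 ha
  obtain ⟨s, hs⟩ := evaln_complete.1 heval
  exact ⟨Nat.pair s (encode a), by simp [dovetailSelect, Option.mem_def.1 hs, hpa]⟩

theorem CEset.exists_partrec_select [Primcodable β] {A : Set α} (hA : CEset A)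
    {p : β → α → Bool} (hp : Computable₂ p) :
    ∃ g : β →. α, Partrec g ∧ (∀ b, ∀ a ∈ g b, a ∈ A ∧ p b a = true) ∧
      ∀ b, (∃ a ∈ A, p b a = true) → (g b).Dom := by
  obtain ⟨f, hf, rfl⟩ := hA
  obtain ⟨c, hc⟩ := exists_code.1 hf
  refine ⟨fun b => Nat.rfindOpt (dovetailSelect c p b),
    Partrec.rfindOpt (computable₂_dovetailSelect c hp), fun b a ha => ?_, ?_⟩
  · obtain ⟨m, hm⟩ := Nat.rfindOpt_spec ha
    exact dovetailSelect_sound hc hm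
  · rintro b ⟨a, ha, hpa⟩
    obtain ⟨m, hm⟩ := exists_dovetailSelect_eq_some hc ha hpa
    exact Nat.rfindOpt_dom.2 ⟨m, a, hm⟩

end Dovetailing

/-- For every `t ≥ 0`, the set `C_{Q,t} = {x ∈ X_Q* : δ_Q(x) > -t}` is immune,
i.e. infinite and containing no infinite c.e. subset. -/
theorem C_Qt_immune {Q : ℕ} (hQ : 2 ≤ Q) (U : SDMachine Q) (hU : IsUniversal U) (t : ℕ) :
    Immune {x : Str Q | -(t : ℤ) < deltaC U x} := by
  refine ⟨Set.infinite_iff_forall_exists_le_length.2 fun n => ?_, fun A hAC hA => ?_⟩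
  · obtain ⟨x, hlen, hx⟩ := exists_length_lt_hm (by omega) U n
    have hpos := deltaC_pos_of_length_lt_hm (hU.hm_ne_top hQ x) hx
    exact ⟨x, show -(t : ℤ) < deltaC U x by omega, hlen⟩
  by_contra hinf
  obtain ⟨g, hg, hgA, hgdom⟩ :=
    hA.exists_partrec_select (p := fun k (x : Str Q) => k ≤ x.length)
      (Primrec.nat_le.decide.comp Primrec.fst (Primrec.list_length.comp Primrec.snd)).to_comp
  obtain ⟨c, hc⟩ := hU.exists_hm_le_add hQ (f := fun k => g (2 * k))
    (hg.comp (Primrec.nat_mul.comp (Primrec.const 2) Primrec.id).to_comp)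
  set k := c + t
  obtain ⟨x, hxA, hxlen⟩ := Set.infinite_iff_forall_exists_le_length.1 hinf (2 * k)
  have hdom : (g (2 * k)).Dom := hgdom _ ⟨x, hxA, decide_eq_true hxlen⟩
  set y := (g (2 * k)).get hdom
  obtain ⟨hyA, hylen⟩ := hgA _ y (Part.get_mem hdom)
  have hdelta : deltaC U y ≤ (k + c : ℕ) - y.length :=
    deltaC_le_of_hm_le (by exact_mod_cast hc k y (Part.get_mem hdom))
  have hyC : -(t : ℤ) < deltaC U y := hAC hyA
  have hylong := of_decide_eq_true hylen
  omega
end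

section
/- Let T ⊆ X_Q* be computably enumerable and let g, g′ : T → B* be two Gödel numberings. Then there effectively exists a constant c (depending on U_2, g and g′) such that for all u ∈ T, |δ_g(u) − δ_{g′}(u)| ≤ c. Hence, asymptotically, the δ-measure is independent of the Gödel numbering. -/
open scoped ENNReal

/-- A Gödel numbering for a set `T ⊆ X_Q*`: a partial computable, one-to-one function
from `T` into binary strings. -/
structure GoedelNumbering (Q : ℕ) (T : Set (Str Q)) where
  g : Str Q →. Str 2
  partrec : Partrec g
  dom_eq : g.Dom = T
  injective : ∀ u ∈ T, ∀ v ∈ T, g u = g v → u = v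

/-- The binary name `g(u)` of `u ∈ T`. -/
noncomputable def GoedelNumbering.val {Q : ℕ} {T : Set (Str Q)} (gn : GoedelNumbering Q T)
    (u : Str Q) (hu : u ∈ T) : Str 2 :=
  (gn.g u).get (by rw [← gn.dom_eq] at hu; exact hu)

/-- The δ-complexity induced by a Gödel numbering:
`δ_g(u) = H_2(g(u)) − ⌈log₂ Q⌉ · |u|_Q`.  (Here `⌈log₂ Q⌉ = Nat.clog 2 Q`.) -/
noncomputable def deltaG {Q : ℕ} {T : Set (Str Q)} (U2 : SDMachine 2)
    (gn : GoedelNumbering Q T) (u : Str Q) (hu : u ∈ T) : ℤ :=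
  ((Hm U2 (gn.val u hu)).toNat : ℤ) - (Nat.clog 2 Q : ℤ) * (u.length : ℤ)

/-!
If `g` and `g'` number the same set `T`, the translation `g'(u) ↦ g(u)` is partial computable:
invert `g'` by searching over pairs (argument, step bound) and then apply `g`. Running a universal
machine and feeding its output to this translation is again a self-delimiting machine, so
universality gives `H₂(g(u)) ≤ H₂(g'(u)) + ε`, and symmetrically. The length terms of `δ_g` and
`δ_{g'}` are identical and cancel.
-/

open Nat.Partrec (Code) in
theorem Partrec.exists_primrec_stages {α σ : Type*} [Primcodable α] [Primcodable σ]
    {f : α →. σ} (hf : Partrec f) :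
    ∃ F : α → ℕ → Option σ, Primrec₂ F ∧ ∀ a x, x ∈ f a ↔ ∃ k, F a k = some x := by
  obtain ⟨c, hc⟩ := Code.exists_code.1 hf
  have hmem : ∀ a m, m ∈ Code.eval c (Encodable.encode a) ↔ ∃ x ∈ f a, Encodable.encode x = m := by
    intro a m
    simp [hc, Part.mem_map_iff]
  refine ⟨fun a k => (Code.evaln k c (Encodable.encode a)).bind Encodable.decode, ?_, ?_⟩
  · exact Primrec.option_bind
      (Code.primrec_evaln.comp (((Primrec.snd).pair (Primrec.const c)).pair
        (Primrec.encode.comp Primrec.fst)))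
      (Primrec.decode.comp Primrec.snd).to₂
  · intro a x
    constructor
    · intro hx
      obtain ⟨k, hk⟩ := Code.evaln_complete.1 ((hmem a _).2 ⟨x, hx, rfl⟩)
      exact ⟨k, by simp [Option.mem_def.1 hk]⟩
    · rintro ⟨k, hk⟩
      obtain ⟨m, hm, hdec⟩ := Option.bind_eq_some_iff.1 hk
      obtain ⟨y, hy, rfl⟩ := (hmem a m).1 (Code.evaln_sound hm)
      simp only [Encodable.encodek, Option.some.injEq] at hdec
      exact hdec ▸ hy

theorem Partrec.exists_partrec_preimage {α σ : Type*} [Primcodable α] [Primcodable σ]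
    [DecidableEq σ] {f : α →. σ} (hf : Partrec f) :
    ∃ g : σ →. α, Partrec g ∧ (∀ x a, a ∈ g x → x ∈ f a) ∧ ∀ a x, x ∈ f a → (g x).Dom := by
  obtain ⟨F, hF, hFf⟩ := hf.exists_primrec_stages
  let G : σ → ℕ → Option α := fun x n => (Encodable.decode (α := α × ℕ) n).bind fun p =>
    if F p.1 p.2 = some x then some p.1 else Option.none
  have hG : Primrec₂ G := Primrec.option_bind (Primrec.decode.comp Primrec.snd) <|
    Primrec.ite (Primrec.eq.comp (hF.comp (Primrec.fst.comp Primrec.snd)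
        (Primrec.snd.comp Primrec.snd)) (Primrec.option_some.comp (Primrec.fst.comp Primrec.fst)))
      (Primrec.option_some.comp (Primrec.fst.comp Primrec.snd)) (Primrec.const Option.none)
  -- dovetail over pairs (argument, number of steps)
  refine ⟨fun x => Nat.rfindOpt (G x), Partrec.rfindOpt hG.to_comp, ?_, ?_⟩
  · intro x a ha
    obtain ⟨n, hn⟩ := Nat.rfindOpt_spec ha
    simp only [G, Option.mem_def, Option.bind_eq_some_iff, Option.ite_none_right_eq_some] at hn
    obtain ⟨⟨a', k⟩, -, hk, ha'⟩ := hn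
    exact Option.some_injective _ ha' ▸ (hFf a' x).2 ⟨k, hk⟩
  · intro a x hx
    obtain ⟨k, hk⟩ := (hFf a x).1 hx
    exact Nat.rfindOpt_dom.2 ⟨Encodable.encode (a, k), a, by simp [G, hk]⟩

theorem PrefixFreeSet.mono {Q : ℕ} {S S' : Set (Str Q)} (h : PrefixFreeSet S') (hS : S ⊆ S') :
    PrefixFreeSet S :=
  fun x hx y hy hxy => h x (hS hx) y (hS hy) hxy

theorem Hm_le_Hm {Q : ℕ} {T T' : SDMachine Q} {x x' : Str Q}
    (h : ∀ p, x' ∈ T'.f p → x ∈ T.f p) : Hm T x ≤ Hm T' x' :=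
  sInf_le_sInf (Set.image_mono h)

namespace SDMachine

variable {Q : ℕ}

def postcomp (U : SDMachine Q) (k : Str Q →. Str Q) (hk : Partrec k) : SDMachine Q where
  f p := (U.f p).bind k
  partrec := U.partrec.bind (hk.comp Computable.snd).to₂
  prefixFree := U.prefixFree.mono fun _ hp => Part.Dom.of_bind hp

theorem Hm_postcomp_le (U : SDMachine Q) {k : Str Q →. Str Q} (hk : Partrec k) {x y : Str Q}
    (hxy : x ∈ k y) : Hm (U.postcomp k hk) x ≤ Hm U y :=
  Hm_le_Hm fun _ hp => Part.mem_bind_iff.2 ⟨y, hp, hxy⟩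

end SDMachine

theorem IsUniversal.exists_Hm_le_of_partrec {Q : ℕ} {U : SDMachine Q} (hU : IsUniversal U)
    {k : Str Q →. Str Q} (hk : Partrec k) :
    ∃ ε : ℕ, ∀ x y, x ∈ k y → Hm U x ≤ Hm U y + ε := by
  obtain ⟨ε, -, hε⟩ := hU (U.postcomp k hk)
  exact ⟨ε, fun x y hxy => (hε x).trans (add_le_add_left (U.Hm_postcomp_le hk hxy) _)⟩

theorem GoedelNumbering.exists_partrec_translate {Q : ℕ} {T : Set (Str Q)}
    (gn gn' : GoedelNumbering Q T) :
    ∃ k : Str 2 →. Str 2, Partrec k ∧ ∀ u hu, gn.val u hu ∈ k (gn'.val u hu) := by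
  obtain ⟨inv, hinv, hinv_mem, hinv_dom⟩ := gn'.partrec.exists_partrec_preimage
  refine ⟨fun w => (inv w).bind gn.g, hinv.bind (gn.partrec.comp Computable.snd).to₂, ?_⟩
  intro u hu
  have hval : gn'.val u hu ∈ gn'.g u := Part.get_mem _
  obtain ⟨v, hv⟩ := Part.dom_iff_mem.1 (hinv_dom u _ hval)
  have hvT : v ∈ T := gn'.dom_eq ▸ Part.dom_iff_mem.2 ⟨_, hinv_mem _ v hv⟩
  have hvu : v = u := gn'.injective v hvT u hu <|
    (Part.eq_some_iff.2 (hinv_mem _ v hv)).trans (Part.eq_some_iff.2 hval).symm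
  subst hvu
  exact Part.mem_bind_iff.2 ⟨v, hv, Part.get_mem _⟩

theorem ENat.toNat_le_toNat_add {a b : ℕ∞} {m n : ℕ} (hab : a ≤ b + m) (hba : b ≤ a + n) :
    a.toNat ≤ b.toNat + m := by
  rcases eq_or_ne b ⊤ with rfl | hb
  · simp_all
  · lift b to ℕ using hb
    lift a to ℕ using ne_top_of_le_ne_top (by simp) hab
    simp only [ENat.toNat_natCast]
    exact_mod_cast hab

theorem deltaG_goedel_independent_general {Q : ℕ}
    (U2 : SDMachine 2) (hU2 : IsUniversal U2) (T : Set (Str Q))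
    (gn gn' : GoedelNumbering Q T) :
    ∃ c : ℕ, ∀ u, ∀ hu : u ∈ T,
      |deltaG U2 gn u hu - deltaG U2 gn' u hu| ≤ (c : ℤ) := by
  obtain ⟨k, hk, hgk⟩ := gn.exists_partrec_translate gn'
  obtain ⟨k', hk', hgk'⟩ := gn'.exists_partrec_translate gn
  obtain ⟨ε, hε⟩ := hU2.exists_Hm_le_of_partrec hk
  obtain ⟨ε', hε'⟩ := hU2.exists_Hm_le_of_partrec hk'
  refine ⟨max ε ε', fun u hu => ?_⟩
  have h := ENat.toNat_le_toNat_add (hε _ _ (hgk u hu)) (hε' _ _ (hgk' u hu))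
  have h' := ENat.toNat_le_toNat_add (hε' _ _ (hgk' u hu)) (hε _ _ (hgk u hu))
  simp only [deltaG, sub_sub_sub_cancel_right, abs_sub_le_iff]
  omega

/-- For a c.e. set `T ⊆ X_Q*` and two Gödel numberings `g, g' : T → B*`, there effectively
is a constant `c` with `|δ_g(u) − δ_{g'}(u)| ≤ c` for all `u ∈ T`: asymptotically, the
δ-measure is independent of the Gödel numbering. -/
theorem deltaG_goedel_independent {Q : ℕ} (hQ : 2 ≤ Q)
    (U2 : SDMachine 2) (hU2 : IsUniversal U2) (T : Set (Str Q)) (hT : CEset T)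
    (gn gn' : GoedelNumbering Q T) :
    ∃ c : ℕ, ∀ u, ∀ hu : u ∈ T,
      |deltaG U2 gn u hu - deltaG U2 gn' u hu| ≤ (c : ℤ) :=
  deltaG_goedel_independent_general U2 hU2 T gn gn'
end

section
/- Let T ⊆ X_Q* be a computably enumerable set of strings for which there is a constant d > 0 with H_Q(x) ≤ |x|_Q + d for all x ∈ T (as holds, because of syntactic constraints, for the set of theorems of any finitely-specified, arithmetically sound, consistent theory strong enough to formalize arithmetic). Then for every Gödel numbering g : T → B* there exists a constant N (depending on U_Q, U_2 and T) such that δ_g(x) ≤ N for every x ∈ T. -/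
open scoped ENNReal

set_option maxHeartbeats 1000000

namespace ChaitinAux

/-! ### Bit-level binary encoding of naturals -/

/-- little-endian value of a binary string -/
def ofBits : Str 2 → ℕ
  | [] => 0
  | b :: w => b.val + 2 * ofBits w

/-- little-endian `k`-bit representation of `n` -/
def toBits : ℕ → ℕ → Str 2
  | 0, _ => []
  | k + 1, n => ⟨n % 2, by omega⟩ :: toBits k (n / 2)

@[simp] lemma length_toBits (k n : ℕ) : (toBits k n).length = k := by
  induction k generalizing n with
  | zero => rfl
  | succ k ih => simp [toBits, ih]

lemma ofBits_toBits {k n : ℕ} (h : n < 2 ^ k) : ofBits (toBits k n) = n := by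
  induction k generalizing n with
  | zero =>
    simp only [pow_zero, Nat.lt_one_iff] at h
    simp [toBits, ofBits, h]
  | succ k ih =>
    have h2 : n / 2 < 2 ^ k := by
      rw [Nat.div_lt_iff_lt_mul (by norm_num)]
      calc n < 2 ^ (k + 1) := h
        _ = 2 ^ k * 2 := by ring
    simp [toBits, ofBits, ih h2]
    omega

lemma toBits_ofBits {w : Str 2} : toBits w.length (ofBits w) = w := by
  induction w with
  | nil => rfl
  | cons b w ih =>
    have hb : (b : ℕ) < 2 := b.isLt
    have h1 : (b.val + 2 * ofBits w) % 2 = b.val := by omega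
    have h2 : (b.val + 2 * ofBits w) / 2 = ofBits w := by omega
    simp only [List.length_cons, toBits, ofBits, h1, h2, ih]

/-! ### Block encoding of `Q`-ary strings into binary -/

/-- block encoding: each digit becomes `k` bits -/
def enc (Q k : ℕ) : Str Q → Str 2
  | [] => []
  | d :: z => toBits k d.val ++ enc Q k z

@[simp] lemma enc_nil (Q k : ℕ) : enc Q k [] = [] := rfl

@[simp] lemma enc_cons (Q k : ℕ) (d : Fin Q) (z : Str Q) :
    enc Q k (d :: z) = toBits k d.val ++ enc Q k z := rfl

@[simp] lemma length_enc (Q k : ℕ) (z : Str Q) : (enc Q k z).length = k * z.length := by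
  induction z with
  | nil => simp
  | cons d z ih => simp [ih, Nat.mul_succ]; ring

lemma toBits_inj {Q k : ℕ} (hQk : Q ≤ 2 ^ k) {d e : Fin Q}
    (h : toBits k d.val = toBits k e.val) : d = e := by
  have hd : (d : ℕ) < 2 ^ k := lt_of_lt_of_le d.isLt hQk
  have he : (e : ℕ) < 2 ^ k := lt_of_lt_of_le e.isLt hQk
  have := congrArg ofBits h
  rw [ofBits_toBits hd, ofBits_toBits he] at this
  exact Fin.ext this

lemma enc_prefix {Q k : ℕ} (hk : 1 ≤ k) (hQk : Q ≤ 2 ^ k) :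
    ∀ {z₁ z₂ : Str Q}, enc Q k z₁ <+: enc Q k z₂ → z₁ <+: z₂ := by
  intro z₁
  induction z₁ with
  | nil => intro z₂ _; exact List.nil_prefix
  | cons d t₁ ih =>
    intro z₂ h
    cases z₂ with
    | nil =>
      exfalso
      have := List.prefix_nil.mp h
      have := congrArg List.length this
      simp at this
      omega
    | cons e t₂ =>
      obtain ⟨s, hs⟩ := h
      simp only [enc_cons, List.append_assoc] at hs
      have hde : toBits k d.val = toBits k e.val := by
        have := congrArg (List.take k) hs
        rwa [List.take_left' (length_toBits k d.val), List.take_left' (length_toBits k e.val)]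
          at this
      have hde' : d = e := toBits_inj hQk hde
      rw [hde] at hs
      have htail : enc Q k t₁ ++ s = enc Q k t₂ := List.append_cancel_left hs
      rw [hde']
      exact List.cons_prefix_cons.mpr ⟨rfl, ih ⟨s, htail⟩⟩

/-! ### The decoding machine -/

/-- decode a single natural to a digit, if possible -/
def digit (Q : ℕ) (n : ℕ) : Option (Fin Q) :=
  if h : n < Q then some ⟨n, h⟩ else none

lemma digit_eq_some {Q n : ℕ} {d : Fin Q} : digit Q n = some d ↔ n = d.val := by
  unfold digit
  split
  · simp [Fin.ext_iff]
  · rename_i h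
    constructor
    · intro he; exact absurd he (by simp)
    · intro hn; exact absurd (hn ▸ d.isLt) h

lemma digit_val {Q : ℕ} (d : Fin Q) : digit Q d.val = some d := digit_eq_some.mpr rfl

/-- machine state: (accumulated output, partial block value, bits read in block, input left) -/
abbrev St (Q : ℕ) : Type := Str Q × ℕ × ℕ × Str 2

/-- process one input bit -/
def stepGo (Q k : ℕ) (p : St Q) : Option (St Q) :=
  List.casesOn p.2.2.2 (if p.2.2.1 = 0 then some p else none) fun b r =>
    if p.2.2.1 + 1 = k then
      (digit Q (p.2.1 + b.val * 2 ^ p.2.2.1)).map fun d => (p.1 ++ [d], 0, 0, r)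
    else some (p.1, p.2.1 + b.val * 2 ^ p.2.2.1, p.2.2.1 + 1, r)

def step (Q k : ℕ) (s : Option (St Q)) : Option (St Q) := s.bind (stepGo Q k)

@[simp] lemma step_none (Q k : ℕ) : step Q k none = none := rfl

@[simp] lemma step_some (Q k : ℕ) (p : St Q) : step Q k (some p) = stepGo Q k p := rfl

lemma stepGo_nil (Q k : ℕ) (acc : Str Q) (m c : ℕ) :
    stepGo Q k (acc, m, c, []) = if c = 0 then some (acc, m, c, []) else none := rfl

lemma stepGo_cons (Q k : ℕ) (acc : Str Q) (m c : ℕ) (b : Fin 2) (r : Str 2) :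
    stepGo Q k (acc, m, c, b :: r) =
      if c + 1 = k then
        (digit Q (m + b.val * 2 ^ c)).map fun d => (acc ++ [d], 0, 0, r)
      else some (acc, m + b.val * 2 ^ c, c + 1, r) := rfl

def check (Q : ℕ) (p : St Q) : Option (Str Q) :=
  if p.2.2.2 = [] then if p.2.2.1 = 0 then some p.1 else none else none

def decode' (Q k : ℕ) (y : Str 2) : Option (Str Q) :=
  ((step Q k)^[y.length] (some ([], 0, 0, y))).bind (check Q)

/-! ### Correctness: decoding an encoded string -/

lemma run_block (Q k : ℕ) :
    ∀ (w : Str 2) (c m : ℕ) (acc : Str Q) (r : Str 2) (d : Fin Q), w ≠ [] →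
      c + w.length = k → m + ofBits w * 2 ^ c = d.val →
      (step Q k)^[w.length] (some (acc, m, c, w ++ r)) = some (acc ++ [d], 0, 0, r) := by
  intro w
  induction w with
  | nil => intro _ _ _ _ _ h; exact absurd rfl h
  | cons b w ih =>
    intro c m acc r d _ hc hv
    rw [List.length_cons, Function.iterate_succ_apply, List.cons_append, step_some,
      stepGo_cons]
    cases w with
    | nil =>
      have hck : c + 1 = k := by simpa using hc
      have hm : m + b.val * 2 ^ c = d.val := by
        simp [ofBits] at hv; omega
      simp [hck, hm, digit_val d]
    | cons b' w' =>
      simp only [List.length_cons] at hc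
      have hck : c + 1 ≠ k := by omega
      rw [if_neg hck]
      apply ih _ _ _ _ _ (by simp) (by simp only [List.length_cons]; omega)
      rw [← hv]
      simp [ofBits, pow_succ]
      ring

lemma run_enc {Q k : ℕ} (hk1 : 1 ≤ k) (hQk : Q ≤ 2 ^ k) :
    ∀ (z : Str Q) (acc : Str Q) (r : Str 2),
      (step Q k)^[(enc Q k z).length] (some (acc, 0, 0, enc Q k z ++ r)) =
        some (acc ++ z, 0, 0, r) := by
  intro z
  induction z with
  | nil => intro acc r; simp
  | cons d t ih =>
    intro acc r
    have hlen : (enc Q k (d :: t)).length = (enc Q k t).length + k := by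
      simp [Nat.mul_succ]; ring
    rw [hlen, Function.iterate_add_apply]
    have hblock : (step Q k)^[k] (some (acc, 0, 0, enc Q k (d :: t) ++ r)) =
        some (acc ++ [d], 0, 0, enc Q k t ++ r) := by
      have := run_block Q k (toBits k d.val) 0 0 acc (enc Q k t ++ r) d
        (by intro h; have := congrArg List.length h; simp at this; omega)
        (by simp)
        (by simp [ofBits_toBits (lt_of_lt_of_le d.isLt hQk)])
      rw [length_toBits] at this
      simpa [List.append_assoc] using this
    rw [hblock, ih]
    simp

lemma decode'_enc {Q k : ℕ} (hk : 1 ≤ k) (hQk : Q ≤ 2 ^ k) (z : Str Q) :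
    decode' Q k (enc Q k z) = some z := by
  unfold decode'
  have := run_enc hk hQk z [] []
  rw [List.append_nil] at this
  rw [this]
  simp [check]

/-! ### Soundness: anything decoded was an encoding -/

lemma sound {Q k : ℕ} :
    ∀ (n : ℕ) (acc : Str Q) (m c : ℕ) (rest : Str 2) (z : Str Q), c < k → m < 2 ^ c →
      ((step Q k)^[n] (some (acc, m, c, rest))).bind (check Q) = some z →
      ∃ t : Str Q, z = acc ++ t ∧
        ((c = 0 ∧ m = 0 ∧ rest = enc Q k t) ∨
          ∃ (w : Str 2) (d : Fin Q) (t' : Str Q), w.length + c = k ∧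
            m + ofBits w * 2 ^ c = d.val ∧ t = d :: t' ∧ rest = w ++ enc Q k t') := by
  intro n
  induction n with
  | zero =>
    intro acc m c rest z hc hm H
    simp only [Function.iterate_zero_apply, Option.bind_eq_bind, Option.bind_some,
      check] at H
    by_cases h1 : rest = []
    · by_cases h2 : c = 0
      · rw [if_pos h1, if_pos h2] at H
        refine ⟨[], by simpa using H.symm, Or.inl ⟨h2, by subst h2; omega, by simp [h1]⟩⟩
      · rw [if_pos h1, if_neg h2] at H; exact absurd H (by simp)
    · rw [if_neg h1] at H; exact absurd H (by simp)
  | succ n ih =>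
    intro acc m c rest z hc hm H
    rw [Function.iterate_succ_apply, step_some] at H
    cases rest with
    | nil =>
      rw [stepGo_nil] at H
      by_cases h2 : c = 0
      · rw [if_pos h2] at H
        subst h2
        exact ih acc m 0 [] z hc hm H
      · rw [if_neg h2] at H
        rw [show ((step Q k)^[n] none) = none from Function.iterate_fixed rfl n] at H
        exact absurd H (by simp)
    | cons b r =>
      rw [stepGo_cons] at H
      by_cases hck : c + 1 = k
      · rw [if_pos hck] at H
        cases hdig : digit Q (m + b.val * 2 ^ c) with
        | none =>
          rw [hdig] at H
          rw [show ((step Q k)^[n] (Option.map _ none)) = none from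
            Function.iterate_fixed rfl n] at H
          exact absurd H (by simp)
        | some d =>
          rw [hdig, Option.map_some] at H
          obtain ⟨t, ht, hbr⟩ := ih (acc ++ [d]) 0 0 r z (by omega) (by norm_num) H
          have hr : r = enc Q k t := by
            rcases hbr with ⟨_, _, h⟩ | ⟨w, d', t', hw, hv, ht', hrw⟩
            · exact h
            · have hwlen : w.length = k := by omega
              have : w = toBits k d'.val := by
                have h1 : ofBits w = d'.val := by simpa using hv
                rw [← h1, ← hwlen, toBits_ofBits]
              rw [hrw, ht', this, ← enc_cons]
          refine ⟨d :: t, by simp [ht], Or.inr ⟨[b], d, t, by simp; omega,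
            by simp [ofBits]; exact digit_eq_some.mp hdig, rfl, by simp [hr]⟩⟩
      · rw [if_neg hck] at H
        have hc' : c + 1 < k := by omega
        have hm' : m + b.val * 2 ^ c < 2 ^ (c + 1) := by
          have := b.isLt
          rw [pow_succ]
          nlinarith
        obtain ⟨t, ht, hbr⟩ := ih acc (m + b.val * 2 ^ c) (c + 1) r z hc' hm' H
        rcases hbr with ⟨h0, _, _⟩ | ⟨w, d, t', hw, hv, ht', hrw⟩
        · omega
        · refine ⟨t, ht, Or.inr ⟨b :: w, d, t', by simp; omega, ?_, ht', by simp [hrw]⟩⟩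
          rw [← hv]
          simp [ofBits, pow_succ]
          ring

lemma decode'_sound {Q k : ℕ} (hk : 1 ≤ k) {y : Str 2} {z : Str Q}
    (h : decode' Q k y = some z) : y = enc Q k z := by
  unfold decode' at h
  obtain ⟨t, ht, hbr⟩ := sound y.length [] 0 0 y z (by omega) (by norm_num) h
  simp only [List.nil_append] at ht
  subst ht
  rcases hbr with ⟨_, _, h⟩ | ⟨w, d, t', hw, hv, ht', hrw⟩
  · exact h
  · have hwlen : w.length = k := by omega
    have : w = toBits k d.val := by
      have h1 : ofBits w = d.val := by simpa using hv
      rw [← h1, ← hwlen, toBits_ofBits]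
    rw [hrw, ht', this, ← enc_cons]

/-! ### Computability -/

lemma primrec_pow2 : Primrec (fun c : ℕ => 2 ^ c) := by
  have : Primrec (fun c : ℕ => Nat.rec (motive := fun _ => ℕ) 1 (fun _ ih => 2 * ih) c) :=
    Primrec.nat_rec₁ 1 (Primrec.nat_mul.comp (Primrec.const 2) Primrec.snd).to₂
  refine this.of_eq fun c => ?_
  induction c with
  | zero => rfl
  | succ c ih => simp only [pow_succ]; rw [← ih]; simp [mul_comm]

lemma primrec_digit (Q : ℕ) : Primrec (digit Q) := by
  have h : Primrec fun n : ℕ => Encodable.encode (digit Q n) := by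
    have : Primrec fun n : ℕ => if n < Q then n + 1 else 0 :=
      Primrec.ite (PrimrecRel.comp Primrec.nat_lt Primrec.id (Primrec.const Q))
        (Primrec.succ.comp Primrec.id) (Primrec.const 0)
    refine this.of_eq fun n => ?_
    unfold digit
    split
    · simp [Encodable.encode_some]; rfl
    · rfl
  exact Primrec.encode_iff.mp h

lemma primrec_stepGo (Q k : ℕ) : Primrec (stepGo Q k) := by
  have hacc : Primrec fun p : St Q => p.1 := Primrec.fst
  have hm : Primrec fun p : St Q => p.2.1 := Primrec.fst.comp Primrec.snd
  have hc : Primrec fun p : St Q => p.2.2.1 :=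
    Primrec.fst.comp (Primrec.snd.comp Primrec.snd)
  have hrest : Primrec fun p : St Q => p.2.2.2 :=
    Primrec.snd.comp (Primrec.snd.comp Primrec.snd)
  -- nil branch
  have hg : Primrec fun p : St Q => if p.2.2.1 = 0 then some p else none :=
    Primrec.ite (PrimrecRel.comp Primrec.eq hc (Primrec.const 0))
      (Primrec.option_some.comp Primrec.id) (Primrec.const none)
  -- cons branch
  have hm' : Primrec fun q : St Q × Fin 2 × Str 2 => q.1.2.1 + (q.2.1).val * 2 ^ q.1.2.2.1 :=
    Primrec.nat_add.comp (hm.comp Primrec.fst)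
      (Primrec.nat_mul.comp (Primrec.fin_val.comp (Primrec.fst.comp Primrec.snd))
        (primrec_pow2.comp (hc.comp Primrec.fst)))
  have hh : Primrec fun q : St Q × Fin 2 × Str 2 =>
      if q.1.2.2.1 + 1 = k then
        (digit Q (q.1.2.1 + (q.2.1).val * 2 ^ q.1.2.2.1)).map fun d =>
          (q.1.1 ++ [d], 0, 0, q.2.2)
      else some (q.1.1, q.1.2.1 + (q.2.1).val * 2 ^ q.1.2.2.1, q.1.2.2.1 + 1, q.2.2) := by
    have hcond : PrimrecPred fun q : St Q × Fin 2 × Str 2 => q.1.2.2.1 + 1 = k :=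
      PrimrecRel.comp Primrec.eq (Primrec.succ.comp (hc.comp Primrec.fst)) (Primrec.const k)
    have hthen : Primrec fun q : St Q × Fin 2 × Str 2 =>
        (digit Q (q.1.2.1 + (q.2.1).val * 2 ^ q.1.2.2.1)).map fun d =>
          (q.1.1 ++ [d], 0, 0, q.2.2) := by
      refine Primrec.option_map ((primrec_digit Q).comp hm') ?_
      have h111 : Primrec fun qd : (St Q × Fin 2 × Str 2) × Fin Q => qd.1.1.1 :=
        hacc.comp (Primrec.fst.comp Primrec.fst)
      have h122 : Primrec fun qd : (St Q × Fin 2 × Str 2) × Fin Q => qd.1.2.2 :=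
        (Primrec.snd.comp Primrec.snd).comp Primrec.fst
      have hfin : Primrec fun qd : (St Q × Fin 2 × Str 2) × Fin Q =>
          ((qd.1.1.1 ++ [qd.2], 0, 0, qd.1.2.2) : St Q) :=
        Primrec.pair (Primrec.list_concat.comp h111 Primrec.snd)
          (Primrec.pair (Primrec.const 0) (Primrec.pair (Primrec.const 0) h122))
      exact hfin.to₂
    have helse : Primrec fun q : St Q × Fin 2 × Str 2 =>
        (some (q.1.1, q.1.2.1 + (q.2.1).val * 2 ^ q.1.2.2.1, q.1.2.2.1 + 1, q.2.2) :
          Option (St Q)) :=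
      Primrec.option_some.comp (Primrec.pair (hacc.comp Primrec.fst)
        (Primrec.pair hm' (Primrec.pair (Primrec.succ.comp (hc.comp Primrec.fst))
          (Primrec.snd.comp Primrec.snd))))
    exact Primrec.ite hcond hthen helse
  have := Primrec.list_casesOn (f := fun p : St Q => p.2.2.2)
    (g := fun p : St Q => if p.2.2.1 = 0 then some p else none)
    (h := fun (p : St Q) (br : Fin 2 × Str 2) =>
      if p.2.2.1 + 1 = k then
        (digit Q (p.2.1 + (br.1).val * 2 ^ p.2.2.1)).map fun d => (p.1 ++ [d], 0, 0, br.2)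
      else some (p.1, p.2.1 + (br.1).val * 2 ^ p.2.2.1, p.2.2.1 + 1, br.2))
    hrest hg hh.to₂
  refine this.of_eq fun p => ?_
  obtain ⟨acc, m, c, rest⟩ := p
  cases rest <;> rfl

lemma primrec_step (Q k : ℕ) : Primrec (step Q k) :=
  Primrec.option_bind Primrec.id ((primrec_stepGo Q k).comp Primrec.snd).to₂

lemma primrec_check (Q : ℕ) : Primrec (check Q) := by
  have hc : Primrec fun p : St Q => p.2.2.1 :=
    Primrec.fst.comp (Primrec.snd.comp Primrec.snd)
  have hrest : Primrec fun p : St Q => p.2.2.2 :=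
    Primrec.snd.comp (Primrec.snd.comp Primrec.snd)
  exact Primrec.ite (PrimrecRel.comp Primrec.eq hrest (Primrec.const []))
    (Primrec.ite (PrimrecRel.comp Primrec.eq hc (Primrec.const 0))
      (Primrec.option_some.comp Primrec.fst) (Primrec.const none))
    (Primrec.const none)

lemma iterate_eq_rec {α : Type*} (f : α → α) (n : ℕ) (a : α) :
    f^[n] a = Nat.rec (motive := fun _ => α) a (fun _ ih => f ih) n := by
  induction n with
  | zero => rfl
  | succ n ih => rw [Function.iterate_succ_apply', ih]

lemma computable_decode' (Q k : ℕ) : Computable (decode' Q k) := by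
  have hit : Primrec fun y : Str 2 => (step Q k)^[y.length] (some ([], 0, 0, y)) := by
    have := Primrec.nat_rec' (f := fun y : Str 2 => y.length)
      (g := fun y : Str 2 => (some (([] : Str Q), 0, 0, y) : Option (St Q)))
      (h := fun _ q => step Q k q.2)
      Primrec.list_length
      (Primrec.option_some.comp (Primrec.pair (Primrec.const ([] : Str Q))
        (Primrec.pair (Primrec.const 0) (Primrec.pair (Primrec.const 0) Primrec.id))))
      (((primrec_step Q k).comp Primrec.snd).comp Primrec.snd).to₂
    refine this.of_eq fun y => ?_
    rw [iterate_eq_rec]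
  exact (Primrec.option_bind hit ((primrec_check Q).comp Primrec.snd).to₂).to_comp

/-! ### The simulating binary machine -/

/-- Binary machine simulating `U` on block-decoded programs, then Gödel-numbering the
output. -/
def M2f {Q : ℕ} (k : ℕ) {T : Set (Str Q)} (U : SDMachine Q) (gn : GoedelNumbering Q T) :
    Str 2 →. Str 2 := fun y =>
  (Part.ofOption (decode' Q k y)).bind fun zq => (U.f zq).bind fun x => gn.g x

lemma mem_M2f {Q k : ℕ} {T : Set (Str Q)} {U : SDMachine Q} {gn : GoedelNumbering Q T}
    {y : Str 2} {v : Str 2} :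
    v ∈ M2f k U gn y ↔ ∃ zq, decode' Q k y = some zq ∧ ∃ x ∈ U.f zq, v ∈ gn.g x := by
  simp only [M2f, Part.mem_bind_iff, Part.mem_ofOption]
  constructor
  · rintro ⟨zq, hzq, x, hx, hv⟩
    exact ⟨zq, hzq, x, hx, hv⟩
  · rintro ⟨zq, hzq, x, hx, hv⟩
    exact ⟨zq, hzq, x, hx, hv⟩

lemma partrec_M2f {Q : ℕ} (k : ℕ) {T : Set (Str Q)} (U : SDMachine Q)
    (gn : GoedelNumbering Q T) : Partrec (M2f k U gn) := by
  have h1 : Partrec fun y : Str 2 => (Part.ofOption (decode' Q k y)) :=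
    (computable_decode' Q k).ofOption
  exact h1.bind ((U.partrec.comp Computable.snd).bind
    (gn.partrec.comp Computable.snd).to₂).to₂

lemma prefixFree_M2f {Q k : ℕ} (hk : 1 ≤ k) (hQk : Q ≤ 2 ^ k) {T : Set (Str Q)}
    (U : SDMachine Q) (gn : GoedelNumbering Q T) :
    PrefixFreeSet (PFun.Dom (M2f k U gn)) := by
  intro y₁ h₁ y₂ h₂ hpre
  obtain ⟨v₁, hv₁⟩ := (PFun.mem_dom _ _).mp h₁
  obtain ⟨v₂, hv₂⟩ := (PFun.mem_dom _ _).mp h₂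
  obtain ⟨z₁, hz₁, x₁, hx₁, -⟩ := mem_M2f.mp hv₁
  obtain ⟨z₂, hz₂, x₂, hx₂, -⟩ := mem_M2f.mp hv₂
  have hy₁ : y₁ = enc Q k z₁ := decode'_sound hk hz₁
  have hy₂ : y₂ = enc Q k z₂ := decode'_sound hk hz₂
  have hzz : z₁ <+: z₂ := enc_prefix hk hQk (hy₁ ▸ hy₂ ▸ hpre)
  have : z₁ = z₂ := U.prefixFree z₁ ((PFun.mem_dom _ _).mpr ⟨x₁, hx₁⟩) z₂
    ((PFun.mem_dom _ _).mpr ⟨x₂, hx₂⟩) hzz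
  rw [hy₁, hy₂, this]

/-- The simulating machine as an `SDMachine 2`. -/
def M2 {Q k : ℕ} (hk : 1 ≤ k) (hQk : Q ≤ 2 ^ k) {T : Set (Str Q)} (U : SDMachine Q)
    (gn : GoedelNumbering Q T) : SDMachine 2 where
  f := M2f k U gn
  partrec := partrec_M2f k U gn
  prefixFree := prefixFree_M2f hk hQk U gn

end ChaitinAux

open ChaitinAux in
/-- If `T ⊆ X_Q*` is c.e. and there is a constant `d > 0` with `H_Q(x) ≤ |x|_Q + d` for all
`x ∈ T` (as for the theorems of a finitely-specified, arithmetically sound, consistent theory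
strong enough to formalize arithmetic), then for every Gödel numbering `g` of `T` there is a
constant `N` such that `δ_g(x) ≤ N` for every `x ∈ T`. -/
theorem theorems_bounded_deltaG {Q : ℕ} (hQ : 2 ≤ Q) (U : SDMachine Q) (hU : IsUniversal U)
    (U2 : SDMachine 2) (hU2 : IsUniversal U2) (T : Set (Str Q)) (hT : CEset T)
    (d : ℕ) (hd : 0 < d) (hbound : ∀ x ∈ T, Hm U x ≤ (x.length : ℕ∞) + (d : ℕ∞))
    (gn : GoedelNumbering Q T) :
    ∃ N : ℕ, ∀ x, ∀ hx : x ∈ T, deltaG U2 gn x hx ≤ (N : ℤ) := by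
  classical
  set k := Nat.clog 2 Q with hkdef
  have hk : 1 ≤ k := Nat.clog_pos (by norm_num) hQ
  have hQk : Q ≤ 2 ^ k := Nat.le_pow_clog (by norm_num) Q
  obtain ⟨ε, hε, hεle⟩ := hU2 (M2 hk hQk U gn)
  refine ⟨k * d + ε, fun x hx => ?_⟩
  -- a short `U`-program for `x`
  have hshort : ∃ z, x ∈ U.f z ∧ z.length ≤ x.length + d := by
    by_contra h
    push_neg at h
    have hgei : ((x.length + d + 1 : ℕ) : ℕ∞) ≤ Hm U x := by
      apply le_sInf
      rintro b ⟨z, hz, rfl⟩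
      have h2 := h z hz
      show ((x.length + d + 1 : ℕ) : ℕ∞) ≤ ((z.length : ℕ) : ℕ∞)
      exact Nat.cast_le.mpr (by omega)
    have hle : Hm U x ≤ ((x.length + d : ℕ) : ℕ∞) := by
      have := hbound x hx
      rwa [Nat.cast_add]
    have : ((x.length + d + 1 : ℕ) : ℕ∞) ≤ ((x.length + d : ℕ) : ℕ∞) := hgei.trans hle
    rw [Nat.cast_le] at this
    omega
  obtain ⟨z, hz, hzlen⟩ := hshort
  -- the simulating machine produces `gn.val x hx` from `enc z`
  set v := gn.val x hx with hvdef
  have hvmem : v ∈ gn.g x := Part.get_mem _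
  have hMv : v ∈ (M2 hk hQk U gn).f (enc Q k z) := by
    rw [show (M2 hk hQk U gn).f = M2f k U gn from rfl]
    exact mem_M2f.mpr ⟨z, decode'_enc hk hQk z, x, hz, hvmem⟩
  have hHm2 : Hm (M2 hk hQk U gn) v ≤ ((k * (x.length + d) : ℕ) : ℕ∞) := by
    refine le_trans (sInf_le ⟨enc Q k z, hMv, rfl⟩) ?_
    rw [Nat.cast_le, length_enc]
    exact Nat.mul_le_mul_left k hzlen
  have hHU2 : Hm U2 v ≤ ((k * (x.length + d) + ε : ℕ) : ℕ∞) := by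
    calc Hm U2 v ≤ Hm (M2 hk hQk U gn) v + (ε : ℕ∞) := hεle v
      _ ≤ ((k * (x.length + d) : ℕ) : ℕ∞) + (ε : ℕ∞) := by gcongr
      _ = ((k * (x.length + d) + ε : ℕ) : ℕ∞) := by rw [Nat.cast_add]
  have hne : Hm U2 v ≠ ⊤ :=
    ne_top_of_le_ne_top (ENat.coe_ne_top _) hHU2
  have hnat : (Hm U2 v).toNat ≤ k * (x.length + d) + ε := by
    rw [← Nat.cast_le (α := ℕ∞), ENat.coe_toNat hne]
    exact hHU2
  -- conclude
  rw [deltaG]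
  rw [Nat.mul_add] at hnat
  have hcast : (Nat.clog 2 Q : ℤ) * (x.length : ℤ) = ((k * x.length : ℕ) : ℤ) := by
    rw [hkdef]; push_cast; ring
  rw [hcast]
  have h1 : ((Hm U2 (gn.val x hx)).toNat : ℤ) = ((Hm U2 v).toNat : ℤ) := by rw [hvdef]
  rw [h1]
  omega
end

section
/- For every fixed integer M, lim_{n→∞} Q^{−n} · card{x ∈ X_Q* : |x|_Q = n and δ_Q(x) ≤ M} = 0. -/
open scoped ENNReal

/-!
Against the machine that prints `x` on the empty program, universality makes every `H(x)`
finite, so each `x` has a shortest program, of length `H(x)`. These programs are distinct and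
form a prefix-free set, hence by Kraft's inequality `∑ₓ Q^{-H(x)} ≤ 1`. Grouping this series by
`|x| = n`, its blocks `tₙ` tend to `0`; and a string of length `n` with `δ(x) ≤ M` has
`H(x) ≤ n + M`, so it contributes at least `Q^{-n-M}` to `tₙ`, i.e. the density in question is
at most `Q^M tₙ`.
-/

open Filter Topology InformationTheory

theorem uniquelyDecodable_of_prefixFree {α : Type*} {S : Set (List α)}
    (hS : ∀ x ∈ S, ∀ y ∈ S, x <+: y → x = y) (hnil : [] ∉ S) : UniquelyDecodable S := by
  intro L₁
  induction L₁ with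
  | nil =>
    rintro (_ | ⟨w, L₂⟩) - h₂ hflat
    · rfl
    · have hw : w = [] := List.append_eq_nil_iff.mp hflat.symm |>.1
      exact absurd (hw ▸ h₂ w (List.mem_cons_self ..)) hnil
  | cons w₁ L₁ ih =>
    rintro (_ | ⟨w₂, L₂⟩) h₁ h₂ hflat
    · have hw : w₁ = [] := List.append_eq_nil_iff.mp hflat |>.1
      exact absurd (hw ▸ h₁ w₁ (List.mem_cons_self ..)) hnil
    · simp only [List.flatten_cons] at hflat
      have hw₁ := h₁ w₁ (List.mem_cons_self ..)
      have hw₂ := h₂ w₂ (List.mem_cons_self ..)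
      have hw : w₁ = w₂ := by
        rcases List.prefix_or_prefix_of_prefix (List.prefix_append w₁ L₁.flatten)
            (hflat ▸ List.prefix_append w₂ L₂.flatten) with h | h
        · exact hS _ hw₁ _ hw₂ h
        · exact (hS _ hw₂ _ hw₁ h).symm
      subst hw
      rw [ih L₂ (fun w hw => h₁ w (List.mem_cons_of_mem _ hw))
        (fun w hw => h₂ w (List.mem_cons_of_mem _ hw)) (List.append_cancel_left hflat)]

theorem sum_pow_length_le_one_of_prefixFree {α : Type*} [Fintype α] [Nonempty α]
    {S : Finset (List α)} (hS : ∀ x ∈ S, ∀ y ∈ S, x <+: y → x = y) :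
    ∑ w ∈ S, (1 / Fintype.card α : ℝ) ^ w.length ≤ 1 := by
  by_cases hnil : [] ∈ S
  · have : S = {[]} := Finset.eq_singleton_iff_unique_mem.mpr
      ⟨hnil, fun y hy => (hS _ hnil _ hy List.nil_prefix).symm⟩
    simp [this]
  · exact kraft_mcmillan_inequality (uniquelyDecodable_of_prefixFree hS hnil)

theorem tendsto_sum_zero_of_pairwise_disjoint {β : Type*} {w : β → ℝ} (hw : ∀ x, 0 ≤ w x)
    {C : ℝ} (hC : ∀ F : Finset β, ∑ x ∈ F, w x ≤ C) {s : ℕ → Finset β}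
    (hs : Pairwise (Function.onFun Disjoint s)) :
    Tendsto (fun n => ∑ x ∈ s n, w x) atTop (𝓝 0) := by
  classical
  refine (summable_of_sum_range_le (fun n => Finset.sum_nonneg fun x _ => hw x)
    (c := C) fun N => ?_).tendsto_atTop_zero
  rw [← Finset.sum_biUnion (hs.set_pairwise _)]
  exact hC _

theorem one_div_pow_le_zpow_mul_one_div_pow {q : ℝ} (hq : 1 ≤ q) {h n : ℕ} {M : ℤ}
    (hh : (h : ℤ) ≤ n + M) : (1 / q) ^ n ≤ q ^ M * (1 / q) ^ h := by
  have hq0 : q ≠ 0 := by positivity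
  rw [one_div, ← zpow_natCast, ← zpow_natCast, inv_zpow', inv_zpow', ← zpow_add₀ hq0]
  exact zpow_le_zpow_right₀ hq (by omega)

namespace SDMachine

variable {Q : ℕ}

def const (x : Str Q) : SDMachine Q where
  f y := ((if y = [] then some x else none : Option (Str Q)) : Part (Str Q))
  partrec := Computable.ofOption <| Primrec.to_comp <|
    Primrec.ite (Primrec.eq.comp Primrec.id (Primrec.const [])) (Primrec.const _)
      (Primrec.const _)
  prefixFree := by
    intro y hy y' hy' _
    obtain ⟨_, hy⟩ := (PFun.mem_dom _ _).mp hy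
    obtain ⟨_, hy'⟩ := (PFun.mem_dom _ _).mp hy'
    split_ifs at hy hy' <;> simp_all

theorem Hm_const_self (x : Str Q) : Hm (const x) x = 0 :=
  nonpos_iff_eq_zero.mp <| sInf_le ⟨[], by simp [const], rfl⟩

theorem exists_mem_length_eq_toNat_Hm (T : SDMachine Q) {x : Str Q} (h : Hm T x ≠ ⊤) :
    ∃ y, x ∈ T.f y ∧ y.length = (Hm T x).toNat := by
  have hne : ((fun y : Str Q => (y.length : ℕ∞)) '' {y | x ∈ T.f y}).Nonempty :=
    Set.nonempty_iff_ne_empty.mpr fun he => h (by rw [Hm, he, sInf_empty])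
  obtain ⟨y, hy, hlen⟩ := csInf_mem hne
  exact ⟨y, hy, by rw [Hm, ← hlen, ENat.toNat_natCast]⟩

theorem sum_one_div_pow_Hm_le_one (T : SDMachine Q) (hQ : 0 < Q) (hT : ∀ x, Hm T x ≠ ⊤)
    (F : Finset (Str Q)) : ∑ x ∈ F, (1 / Q : ℝ) ^ (Hm T x).toNat ≤ 1 := by
  have : Nonempty (Fin Q) := ⟨⟨0, hQ⟩⟩
  choose prog hprog hlen using fun x => T.exists_mem_length_eq_toNat_Hm (hT x)
  have hinj : Set.InjOn prog F := fun x _ x' _ h => Part.mem_unique (hprog x) (h ▸ hprog x')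
  have hpf : ∀ p ∈ F.image prog, ∀ p' ∈ F.image prog, p <+: p' → p = p' := by
    simp only [Finset.mem_image]
    rintro _ ⟨x, -, rfl⟩ _ ⟨x', -, rfl⟩
    exact T.prefixFree _ ((PFun.mem_dom _ _).mpr ⟨x, hprog x⟩) _
      ((PFun.mem_dom _ _).mpr ⟨x', hprog x'⟩)
  simpa [Finset.sum_image hinj, hlen] using sum_pow_length_le_one_of_prefixFree hpf

end SDMachine

theorem IsUniversal.Hm_ne_top {Q : ℕ} {U : SDMachine Q} (hU : IsUniversal U) (x : Str Q) :
    Hm U x ≠ ⊤ := by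
  obtain ⟨ε, -, hε⟩ := hU (SDMachine.const x)
  have := hε x
  rw [SDMachine.Hm_const_self, zero_add] at this
  exact ne_top_of_le_ne_top (ENat.natCast_ne_top ε) this

/-- For every fixed integer `M`,
`lim_{n→∞} Q^{-n} · card {x ∈ X_Q* : |x|_Q = n, δ_Q(x) ≤ M} = 0`. -/
theorem low_deltaC_density_zero {Q : ℕ} (hQ : 2 ≤ Q) (U : SDMachine Q)
    (hU : IsUniversal U) (M : ℤ) :
    Filter.Tendsto
      (fun n : ℕ =>
        ({x : Str Q | x.length = n ∧ deltaC U x ≤ M}.ncard : ℝ) / (Q : ℝ) ^ n)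
      Filter.atTop (nhds 0) := by
  have hQ1 : (1 : ℝ) ≤ Q := by exact_mod_cast (by omega : 1 ≤ Q)
  have hfin (n : ℕ) : {x : Str Q | x.length = n ∧ deltaC U x ≤ M}.Finite :=
    (List.finite_length_eq (Fin Q) n).subset fun x hx => hx.1
  set A := fun n => (hfin n).toFinset
  have hA : Pairwise (Function.onFun Disjoint A) := fun n m hnm =>
    Finset.disjoint_left.mpr fun x hn hm => hnm <| by
      simp only [A, Set.Finite.mem_toFinset, Set.mem_ofPred_eq] at hn hm
      rw [← hn.1, hm.1]
  have hsmall := tendsto_sum_zero_of_pairwise_disjoint (fun x => by positivity)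
    (U.sum_one_div_pow_Hm_le_one (by omega) hU.Hm_ne_top) hA
  refine squeeze_zero (fun n => by positivity) (fun n => ?_)
    (by simpa only [mul_zero] using hsmall.const_mul ((Q : ℝ) ^ M))
  calc ({x : Str Q | x.length = n ∧ deltaC U x ≤ M}.ncard : ℝ) / (Q : ℝ) ^ n
      = ∑ x ∈ A n, (1 / Q : ℝ) ^ n := by
        simp [A, Set.ncard_eq_toFinset_card _ (hfin n), div_eq_mul_inv]
    _ ≤ ∑ x ∈ A n, (Q : ℝ) ^ M * (1 / Q : ℝ) ^ (Hm U x).toNat := by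
        refine Finset.sum_le_sum fun x hx => one_div_pow_le_zpow_mul_one_div_pow hQ1 ?_
        simp only [A, Set.Finite.mem_toFinset, Set.mem_ofPred_eq, deltaC] at hx
        omega
    _ = (Q : ℝ) ^ M * ∑ x ∈ A n, (1 / Q : ℝ) ^ (Hm U x).toNat := Finset.mul_sum .. |>.symm
end

section
/- Let T ⊆ X_Q* be a computably enumerable set of strings for which there is a constant d > 0 with H_Q(x) ≤ |x|_Q + d for all x ∈ T. Then the probability that a string of length n belongs to T tends to zero as n tends to infinity: lim_{n→∞} Q^{−n} · card{x ∈ T : |x|_Q = n} = 0. -/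
open scoped ENNReal

namespace KraftAux

variable {Q : ℕ}

def lenFinset (Q n : ℕ) : Finset (Str Q) :=
  (Finset.univ : Finset (Fin n → Fin Q)).image List.ofFn

lemma mem_lenFinset {n : ℕ} {x : Str Q} : x ∈ lenFinset Q n ↔ x.length = n := by
  constructor
  · intro hx
    simp only [lenFinset, Finset.mem_image, Finset.mem_univ, true_and] at hx
    obtain ⟨f, rfl⟩ := hx
    simp
  · intro hx
    simp only [lenFinset, Finset.mem_image, Finset.mem_univ, true_and]
    refine ⟨fun i => x.get (Fin.cast hx.symm i), ?_⟩
    apply List.ext_get (by simp [hx])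
    intro i h1 h2
    simp

lemma card_lenFinset (n : ℕ) : (lenFinset Q n).card = Q ^ n := by
  rw [lenFinset, Finset.card_image_of_injective _ List.ofFn_injective, Finset.card_univ]
  simp

lemma card_ext {y : Str Q} {N : ℕ} (h : y.length ≤ N) :
    ((lenFinset Q N).filter (fun z => y <+: z)).card = Q ^ (N - y.length) := by
  have hset : (lenFinset Q N).filter (fun z => y <+: z)
      = (lenFinset Q (N - y.length)).image (fun w => y ++ w) := by
    ext z
    simp only [Finset.mem_filter, Finset.mem_image, mem_lenFinset]
    constructor
    · rintro ⟨hz, t, rfl⟩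
      refine ⟨t, ?_, rfl⟩
      simp only [List.length_append] at hz
      omega
    · rintro ⟨w, hw, rfl⟩
      refine ⟨?_, ⟨w, rfl⟩⟩
      simp only [List.length_append]
      omega
  rw [hset, Finset.card_image_of_injective _ (fun _ _ hab => List.append_cancel_left hab),
    card_lenFinset]

lemma kraft_finset (hQ : 2 ≤ Q) {S : Set (Str Q)} (hpf : PrefixFreeSet S)
    (F : Finset (Str Q)) (hF : ↑F ⊆ S) :
    ∑ y ∈ F, ((Q : ℝ≥0∞))⁻¹ ^ y.length ≤ 1 := by
  classical
  set N := F.sup List.length with hN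
  have hlen : ∀ y ∈ F, y.length ≤ N := fun y hy => Finset.le_sup hy
  have hdisj : ∀ y1 ∈ F, ∀ y2 ∈ F, y1 ≠ y2 →
      Disjoint ((lenFinset Q N).filter (fun z => y1 <+: z))
               ((lenFinset Q N).filter (fun z => y2 <+: z)) := by
    intro y1 h1 y2 h2 hne
    rw [Finset.disjoint_left]
    intro z hz1 hz2
    simp only [Finset.mem_filter] at hz1 hz2
    rcases List.prefix_or_prefix_of_prefix hz1.2 hz2.2 with hp | hp
    · exact hne (hpf _ (hF h1) _ (hF h2) hp)
    · exact hne ((hpf _ (hF h2) _ (hF h1) hp).symm)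
  have hnat : ∑ y ∈ F, Q ^ (N - y.length) ≤ Q ^ N := by
    calc ∑ y ∈ F, Q ^ (N - y.length)
        = ∑ y ∈ F, ((lenFinset Q N).filter (fun z => y <+: z)).card :=
          Finset.sum_congr rfl fun y hy => (card_ext (hlen y hy)).symm
      _ = (F.biUnion (fun y => (lenFinset Q N).filter (fun z => y <+: z))).card :=
          (Finset.card_biUnion hdisj).symm
      _ ≤ (lenFinset Q N).card := by
          apply Finset.card_le_card
          intro z hz
          simp only [Finset.mem_biUnion, Finset.mem_filter] at hz
          obtain ⟨y, _, hz, _⟩ := hz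
          exact hz
      _ = Q ^ N := card_lenFinset N
  have hQ0 : (Q : ℝ≥0∞) ≠ 0 := by
    simp; omega
  have hQt : (Q : ℝ≥0∞) ≠ ⊤ := ENNReal.natCast_ne_top Q
  have key : ∀ y ∈ F, ((Q : ℝ≥0∞))⁻¹ ^ y.length
      = (Q : ℝ≥0∞) ^ (N - y.length) / (Q : ℝ≥0∞) ^ N := by
    intro y hy
    rw [← ENNReal.inv_pow, ENNReal.eq_div_iff (pow_ne_zero _ hQ0) (ENNReal.pow_ne_top hQt)]
    have : (Q : ℝ≥0∞) ^ N = (Q : ℝ≥0∞) ^ y.length * (Q : ℝ≥0∞) ^ (N - y.length) := by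
      rw [← pow_add]
      congr 1
      have := hlen y hy
      omega
    rw [this, mul_right_comm, ENNReal.mul_inv_cancel (pow_ne_zero _ hQ0)
      (ENNReal.pow_ne_top hQt), one_mul]
  refine le_trans (le_of_eq (Finset.sum_congr rfl key)) ?_
  simp only [div_eq_mul_inv, ← Finset.sum_mul]
  have hsum : (∑ y ∈ F, (Q : ℝ≥0∞) ^ (N - y.length)) ≤ (Q : ℝ≥0∞) ^ N := by
    have : ((∑ y ∈ F, Q ^ (N - y.length) : ℕ) : ℝ≥0∞) ≤ ((Q ^ N : ℕ) : ℝ≥0∞) :=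
      Nat.cast_le.2 hnat
    push_cast at this
    exact this
  calc (∑ y ∈ F, (Q : ℝ≥0∞) ^ (N - y.length)) * ((Q : ℝ≥0∞) ^ N)⁻¹
      ≤ (Q : ℝ≥0∞) ^ N * ((Q : ℝ≥0∞) ^ N)⁻¹ := mul_le_mul_left hsum _
    _ = 1 := ENNReal.mul_inv_cancel (pow_ne_zero _ hQ0) (ENNReal.pow_ne_top hQt)

lemma kraft_tsum (hQ : 2 ≤ Q) {S : Set (Str Q)} (hpf : PrefixFreeSet S) :
    ∑' y : Str Q, S.indicator (fun y => ((Q : ℝ≥0∞))⁻¹ ^ y.length) y ≤ 1 := by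
  classical
  rw [ENNReal.tsum_eq_iSup_sum]
  refine iSup_le fun s => ?_
  have : ∑ y ∈ s, S.indicator (fun y => ((Q : ℝ≥0∞))⁻¹ ^ y.length) y
      = ∑ y ∈ s.filter (· ∈ S), ((Q : ℝ≥0∞))⁻¹ ^ y.length := by
    rw [Finset.sum_filter]
    exact Finset.sum_congr rfl fun y _ => Set.indicator_apply _ _ _
  rw [this]
  refine kraft_finset hQ hpf _ ?_
  intro y hy
  simp only [Finset.coe_filter, Set.mem_setOf_eq] at hy
  exact hy.2

lemma exists_program {Q : ℕ} (U : SDMachine Q) {x : Str Q} {K : ℕ} (h : Hm U x ≤ (K : ℕ∞)) :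
    ∃ y, x ∈ U.f y ∧ y.length ≤ K := by
  by_contra hc
  push_neg at hc
  have h2 : ((K + 1 : ℕ) : ℕ∞) ≤ Hm U x := by
    refine le_sInf ?_
    rintro _ ⟨y, hy, rfl⟩
    exact Nat.cast_le.2 (Nat.succ_le_of_lt (hc y hy))
  have h3 := h2.trans h
  rw [Nat.cast_le] at h3
  omega

end KraftAux

open KraftAux in
/-- If `T ⊆ X_Q*` is c.e. and there is a constant `d > 0` with `H_Q(x) ≤ |x|_Q + d` for all
`x ∈ T` (as for the set of theorems of a consistent, sound, finitely-specified theory strong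
enough to formalize arithmetic), then the probability that a string of length `n` belongs to
`T` tends to zero: `lim_{n→∞} Q^{-n} · card {x ∈ T : |x|_Q = n} = 0`. -/
theorem ce_theorems_density_zero {Q : ℕ} (hQ : 2 ≤ Q) (U : SDMachine Q) (hU : IsUniversal U)
    (T : Set (Str Q)) (hT : CEset T) (d : ℕ) (hd : 0 < d)
    (hbound : ∀ x ∈ T, Hm U x ≤ (x.length : ℕ∞) + (d : ℕ∞)) :
    Filter.Tendsto
      (fun n : ℕ => ({x ∈ T | x.length = n}.ncard : ℝ) / (Q : ℝ) ^ n)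
      Filter.atTop (nhds 0) := by
  classical
  have hQ0 : (Q : ℝ≥0∞) ≠ 0 := by simp; omega
  have hQt : (Q : ℝ≥0∞) ≠ ⊤ := ENNReal.natCast_ne_top Q
  have hQ1 : (Q : ℝ≥0∞)⁻¹ ≤ 1 := by
    rw [ENNReal.inv_le_one]
    exact_mod_cast Nat.one_le_of_lt hQ
  have hprog : ∀ x : T, ∃ y, (x : Str Q) ∈ U.f y ∧ y.length ≤ (x : Str Q).length + d := by
    rintro ⟨x, hx⟩
    refine exists_program U ?_
    have hb := hbound x hx
    push_cast
    exact hb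
  choose p hp1 hp2 using hprog
  have hinj : Function.Injective p := by
    intro x1 x2 h
    have h1 := hp1 x1
    rw [h] at h1
    exact Subtype.ext (Part.mem_unique h1 (hp1 x2))
  set g : Str Q → ℝ≥0∞ := (U.f.Dom).indicator (fun y => (Q : ℝ≥0∞)⁻¹ ^ y.length) with hg
  have hkraft : ∑' y, g y ≤ 1 := kraft_tsum hQ U.prefixFree
  have step1 : ∑' x : T, (Q : ℝ≥0∞)⁻¹ ^ ((x : Str Q).length + d) ≤ 1 := by
    refine le_trans (ENNReal.tsum_le_tsum fun x => ?_)
      (le_trans (ENNReal.tsum_comp_le_tsum_of_injective hinj g) hkraft)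
    have hdom : p x ∈ U.f.Dom := by
      rw [PFun.mem_dom]; exact ⟨_, hp1 x⟩
    show (Q : ℝ≥0∞)⁻¹ ^ ((x : Str Q).length + d) ≤ g (p x)
    rw [hg, Set.indicator_of_mem hdom]
    exact pow_le_pow_right_of_le_one' hQ1 (hp2 x)
  have step2 : ∑' x : T, (Q : ℝ≥0∞)⁻¹ ^ (x : Str Q).length ≤ (Q : ℝ≥0∞) ^ d := by
    have e1 : ∀ x : T, (Q : ℝ≥0∞)⁻¹ ^ ((x : Str Q).length + d)
        = (Q : ℝ≥0∞)⁻¹ ^ (x : Str Q).length * (Q : ℝ≥0∞)⁻¹ ^ d := fun x => pow_add _ _ _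
    rw [tsum_congr e1, ENNReal.tsum_mul_right] at step1
    have h4 := mul_le_mul_left step1 ((Q : ℝ≥0∞) ^ d)
    rw [one_mul, mul_assoc, ← ENNReal.inv_pow,
      ENNReal.inv_mul_cancel (pow_ne_zero _ hQ0) (ENNReal.pow_ne_top hQt), mul_one] at h4
    exact h4
  set Tn : ℕ → Finset (Str Q) := fun n => (lenFinset Q n).filter (· ∈ T) with hTn
  have hTn_mem : ∀ n x, x ∈ Tn n ↔ x ∈ T ∧ x.length = n := by
    intro n x
    simp only [hTn, Finset.mem_filter, mem_lenFinset]
    tauto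
  set f : ℕ → ℝ≥0∞ := fun n => ((Tn n).card : ℝ≥0∞) * (Q : ℝ≥0∞)⁻¹ ^ n with hf
  have hfsum : ∑' n, f n ≤ (Q : ℝ≥0∞) ^ d := by
    rw [ENNReal.tsum_eq_iSup_sum]
    refine iSup_le fun s => le_trans ?_ step2
    have e2 : ∀ n ∈ s, f n = ∑ x ∈ Tn n, (Q : ℝ≥0∞)⁻¹ ^ x.length := by
      intro n _
      rw [hf]
      rw [show (∑ x ∈ Tn n, (Q : ℝ≥0∞)⁻¹ ^ x.length) = ∑ _x ∈ Tn n, (Q : ℝ≥0∞)⁻¹ ^ n from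
        Finset.sum_congr rfl (fun x hx => by rw [((hTn_mem n x).1 hx).2])]
      rw [Finset.sum_const, nsmul_eq_mul]
    have hdisj : (↑s : Set ℕ).PairwiseDisjoint Tn := by
      intro n1 _ n2 _ hne
      simp only [Function.onFun]
      rw [Finset.disjoint_left]
      intro z hz1 hz2
      have e1 := ((hTn_mem n1 z).1 hz1).2
      have e2 := ((hTn_mem n2 z).1 hz2).2
      exact hne (e1 ▸ e2 ▸ rfl)
    rw [Finset.sum_congr rfl e2, ← Finset.sum_biUnion hdisj]
    rw [tsum_subtype T (fun y : Str Q => ((Q : ℝ≥0∞))⁻¹ ^ y.length)]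
    refine le_trans (le_of_eq (Finset.sum_congr rfl fun x hx => ?_))
      (ENNReal.sum_le_tsum (s.biUnion Tn))
    rw [Set.indicator_of_mem]
    simp only [Finset.mem_biUnion] at hx
    obtain ⟨n, _, hx⟩ := hx
    exact ((hTn_mem n x).1 hx).1
  have htend : Filter.Tendsto f Filter.atTop (nhds 0) :=
    ENNReal.tendsto_atTop_zero_of_tsum_ne_top
      (hfsum.trans_lt (ENNReal.pow_ne_top hQt).lt_top).ne
  have hset : ∀ n, {x ∈ T | x.length = n} = (↑(Tn n) : Set (Str Q)) := by
    intro n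
    ext x
    simp only [Set.mem_setOf_eq, Finset.mem_coe, hTn_mem n x]
  have heq : ∀ n, ({x ∈ T | x.length = n}.ncard : ℝ) / (Q : ℝ) ^ n = (f n).toReal := by
    intro n
    rw [hset n, Set.ncard_coe_finset, hf]
    rw [ENNReal.toReal_mul, ENNReal.toReal_pow, ENNReal.toReal_inv, ENNReal.toReal_natCast,
      ENNReal.toReal_natCast, div_eq_mul_inv, inv_pow]
  have htoReal : Filter.Tendsto (fun n => (f n).toReal) Filter.atTop (nhds 0) := by
    have h5 := (ENNReal.tendsto_toReal (by simp : (0 : ℝ≥0∞) ≠ ⊤)).comp htend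
    simpa [Function.comp_def] using h5
  exact Filter.Tendsto.congr (fun n => (heq n).symm) htoReal
end

section
/- Let x_1 x_2 ⋯ be an infinite binary sequence satisfying Chaitin's randomness criterion: there exists a constant μ > 0 such that δ_2(x_1 x_2 ⋯ x_n) ≥ −μ for every n ≥ 1. Then there is no strictly increasing function F from positive integers to positive integers such that the set {(F(i), x_{F(i)}) : i ≥ 1} ⊆ ℕ × {0,1} is computably enumerable. -/
open scoped ENNReal

/-!
An infinite c.e. set of correct digits `(p, x p)` makes the prefixes of `x` compressible. To
describe `x₁ ⋯ x_t`, write `j` in unary as `0^j 1` and let the decoder enumerate the set until,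
at some stage `t`, it has seen `2^j` digits, all at positions `≤ t`; the program then only has
to list the at most `t - 2^j` remaining digits, which the decoder inserts into the gaps. Hence
`δ(x₁ ⋯ x_t) ≤ j + O(1) - 2^j`, which is unbounded below, contradicting Chaitin randomness.
-/

namespace ScatteredDigits

open Nat.Partrec (Code)
open Nat.Partrec.Code Encodable Filter

section Enumeration

variable {α : Type} [Primcodable α]

-- `decode₂` rather than `decode`, so that distinct codes `k` give distinct elements.
def stage (c : Code) (t : ℕ) : List α :=
  (List.range t).filterMap fun k => (evaln t c k).bind fun _ => decode₂ α k

lemma mem_stage {c : Code} {t : ℕ} {a : α} :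
    a ∈ stage c t ↔ encode a < t ∧ (evaln t c (encode a)).isSome := by
  simp only [stage, List.mem_filterMap, List.mem_range, Option.bind_eq_some_iff,
    decode₂_eq_some, Option.isSome_iff_exists]
  grind

lemma nodup_stage (c : Code) (t : ℕ) : (stage c t : List α).Nodup :=
  List.nodup_range.filterMap fun k k' a hk hk' => by
    simp only [Option.mem_def, Option.bind_eq_some_iff, decode₂_eq_some] at hk hk'
    grind

lemma primrec_stage (c : Code) : Primrec (stage (α := α) c) :=
  Primrec.listFilterMap Primrec.list_range <| Primrec.to₂ <| Primrec.option_bind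
    (primrec_evaln.comp ((Primrec.fst.pair (Primrec.const c)).pair Primrec.snd))
    (Primrec.decode₂.comp (Primrec.snd.comp Primrec.fst)).to₂

lemma _root_.CEset.exists_code {S : Set α} (hS : CEset S) :
    ∃ c : Code, ∀ a, a ∈ S ↔ (eval c (encode a)).Dom := by
  obtain ⟨f, hf, rfl⟩ := hS
  obtain ⟨c, hc⟩ := Nat.Partrec.Code.exists_code.mp hf
  exact ⟨c, fun a => by simp [hc, encodek, Part.dom_iff_mem]⟩

variable {S : Set α} {c : Code}

lemma mem_of_mem_stage (hc : ∀ a, a ∈ S ↔ (eval c (encode a)).Dom) {t : ℕ} {a : α}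
    (h : a ∈ stage c t) : a ∈ S := by
  obtain ⟨v, hv⟩ := Option.isSome_iff_exists.mp (mem_stage.mp h).2
  exact (hc a).mpr (Part.dom_iff_mem.mpr ⟨v, evaln_sound hv⟩)

lemma eventually_mem_stage (hc : ∀ a, a ∈ S ↔ (eval c (encode a)).Dom) {a : α} (h : a ∈ S) :
    ∀ᶠ t in atTop, a ∈ stage c t := by
  obtain ⟨v, hv⟩ := Part.dom_iff_mem.mp ((hc a).mp h)
  obtain ⟨k, hk⟩ := evaln_complete.mp hv
  filter_upwards [eventually_ge_atTop k, eventually_gt_atTop (encode a)] with t hkt hat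
  exact mem_stage.mpr ⟨hat, Option.isSome_iff_exists.mpr ⟨v, evaln_mono hkt hk⟩⟩

lemma exists_le_length_stage (hc : ∀ a, a ∈ S ↔ (eval c (encode a)).Dom) (hinf : S.Infinite)
    (m : ℕ) : ∃ t, m ≤ (stage c t : List α).length := by
  classical
  obtain ⟨s, hsS, rfl⟩ := hinf.exists_subset_card_eq m
  obtain ⟨t, ht⟩ := ((s.eventually_all).mpr fun a ha => eventually_mem_stage hc (hsS ha)).exists
  exact ⟨t, (s.card_le_card fun a ha => List.mem_toFinset.mpr (ht a ha)).trans
    (List.toFinset_card_le _)⟩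

lemma fst_lt_of_mem_stage {β : Type} [Primcodable β] {c : Code} {t : ℕ} {q : ℕ × β}
    (h : q ∈ stage c t) : q.1 < t :=
  (Nat.left_le_pair q.1 (encode q.2)).trans_lt (mem_stage.mp h).1

end Enumeration

section Filling

variable {β : Type}

def holes : List (Option β) → List β → List β
  | some _ :: os, _ :: y => holes os y
  | none :: os, b :: y => b :: holes os y
  | _, _ => []

lemma length_holes {os : List (Option β)} {y : List β} (h : os.length = y.length) :
    (holes os y).length = os.countP Option.isNone := by
  induction os generalizing y with
  | nil => simp [holes]
  | cons o os ih =>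
    cases y with
    | nil => simp at h
    | cons b y => cases o <;> simp [holes, ih (Nat.succ_injective h)]

def fill [Inhabited β] : List (Option β) → List β → List β
  | [], _ => []
  | some b :: os, w => b :: fill os w
  | none :: os, w => w.headI :: fill os w.tail

lemma fill_holes [Inhabited β] {os : List (Option β)} {y : List β}
    (h : List.Forall₂ (fun o b => ∀ a ∈ o, a = b) os y) : fill os (holes os y) = y := by
  induction h with
  | nil => rfl
  | @cons o b os y hb _ ih =>
    cases o with
    | none => simp [fill, holes, ih]
    | some a => simp [fill, holes, ih, hb a rfl]

def fillStep [Inhabited β] (s : List β × List β) (o : Option β) : List β × List β :=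
  (o.getD s.2.headI :: s.1, bif o.isSome then s.2 else s.2.tail)

lemma foldl_fillStep [Inhabited β] (os : List (Option β)) (acc w : List β) :
    (os.foldl fillStep (acc, w)).1 = (fill os w).reverse ++ acc := by
  induction os generalizing acc w with
  | nil => rfl
  | cons o os ih => cases o <;> simp [fillStep, fill, ih]

open Primrec in
lemma primrec₂_fill [Inhabited β] [Primcodable β] :
    Primrec₂ (fill : List (Option β) → List β → List β) := by
  have hstep : Primrec₂ (fillStep : List β × List β → Option β → List β × List β) :=
    (list_cons.comp (option_getD.comp snd (list_headI.comp (snd.comp fst))) (fst.comp fst)).pair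
      (cond (option_isSome.comp snd) (snd.comp fst) (list_tail.comp (snd.comp fst)))
  refine (list_reverse.comp (fst.comp (list_foldl fst ((const []).pair snd)
    (hstep.comp (fst.comp snd) (snd.comp snd)).to₂))).to₂.of_eq fun os w => ?_
  simp [foldl_fillStep]

end Filling

section Pattern

variable {β : Type}

def pattern (l : List (ℕ × β)) (n : ℕ) : List (Option β) :=
  (List.range n).map fun i => l.lookup (i + 1)

lemma countP_isNone_pattern_add_length_le {l : List (ℕ × β)} {n : ℕ}
    (hl : (l.map Prod.fst).Nodup) (hpos : ∀ q ∈ l, 1 ≤ q.1 ∧ q.1 ≤ n) :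
    (pattern l n).countP Option.isNone + l.length ≤ n := by
  have hknown : l.length ≤ (pattern l n).countP Option.isSome := by
    have hpattern : pattern l n = (List.range' 1 n).map (List.lookup · l) := by
      simp [pattern, List.range'_eq_map_range, add_comm]
    rw [hpattern, List.countP_map, List.countP_eq_length_filter,
      ← List.length_map (f := Prod.fst)]
    refine (hl.subperm fun p hp => ?_).length_le
    obtain ⟨q, hq, rfl⟩ := List.mem_map.mp hp
    have := hpos q hq
    simp only [List.mem_filter, List.mem_range'_1, Function.comp_apply, List.lookup_isSome_iff]
    exact ⟨by omega, q, hq, by simp⟩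
  have hsplit : (pattern l n).length =
      (pattern l n).countP Option.isSome + (pattern l n).countP Option.isNone := by
    rw [List.length_eq_countP_add_countP Option.isSome]
    exact congrArg _ (List.countP_congr (by simp))
  have hlength : (pattern l n).length = n := by simp [pattern]
  omega

lemma forall₂_pattern {l : List (ℕ × β)} {n : ℕ} {x : ℕ → β} (hx : ∀ q ∈ l, q.2 = x q.1) :
    List.Forall₂ (fun o b => ∀ a ∈ o, a = b) (pattern l n)
      ((List.range n).map fun i => x (i + 1)) := by
  rw [pattern, List.forall₂_map_left_iff, List.forall₂_map_right_iff]
  refine List.forall₂_same.mpr fun i _ b hb => ?_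
  obtain ⟨l₁, l₂, rfl, -⟩ := List.lookup_eq_some_iff.mp hb
  exact hx (i + 1, b) (by simp)

end Pattern

section LeadingZeros

def leadingZeros (y : Str 2) : ℕ := (y.takeWhile (· == 0)).length

lemma leadingZeros_replicate_append (j : ℕ) (w : Str 2) :
    leadingZeros (List.replicate j 0 ++ 1 :: w) = j := by
  simp [leadingZeros]

lemma leadingZeros_append {y : Str 2} (h : leadingZeros y < y.length) (z : Str 2) :
    leadingZeros (y ++ z) = leadingZeros y := by
  unfold leadingZeros at h ⊢
  rw [List.takeWhile_append, if_neg h.ne]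

lemma prefixFreeSet_of_leadingZeros {D : Set (Str 2)}
    (hlt : ∀ y ∈ D, leadingZeros y < y.length)
    (hlen : ∀ y ∈ D, ∀ y' ∈ D, leadingZeros y = leadingZeros y' → y.length = y'.length) :
    PrefixFreeSet D := by
  rintro y hy _ hy' ⟨z, rfl⟩
  have := hlen y hy _ hy' (leadingZeros_append (hlt y hy) z).symm
  simp_all

lemma primrec_leadingZeros : Primrec leadingZeros :=
  Primrec.list_length.comp (Primrec.list_takeWhile (Primrec.beq.comp .id (.const 0)))

end LeadingZeros

section Machine

variable (c : Code)

def firstStage (m : ℕ) : Part ℕ :=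
  Nat.rfind fun t => Part.some (decide (m ≤ (stage c t : List (ℕ × Fin 2)).length))

def knownDigits (t : ℕ) : List (Option (Fin 2)) := pattern (stage c t) t

def decoder : Str 2 →. Str 2 := fun y =>
  (firstStage c (2 ^ leadingZeros y)).bind fun t =>
    Part.ofOption <|
      if y.length = leadingZeros y + 1 + (knownDigits c t).countP Option.isNone then
        some (fill (knownDigits c t) (y.drop (leadingZeros y + 1)))
      else none

variable {c}

lemma firstStage_eq_find {m : ℕ} (h : ∃ t, m ≤ (stage c t : List (ℕ × Fin 2)).length) :
    firstStage c m = Part.some (Nat.find h) :=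
  Part.eq_some_iff.mpr <| Nat.mem_rfind.mpr
    ⟨by simpa using Nat.find_spec h, fun hlt => by simpa using Nat.find_min h hlt⟩

lemma dom_decoder {y : Str 2} :
    (decoder c y).Dom ↔ ∃ t ∈ firstStage c (2 ^ leadingZeros y),
      y.length = leadingZeros y + 1 + (knownDigits c t).countP Option.isNone := by
  simp only [Part.dom_iff_mem, decoder, Part.mem_bind_iff, Part.mem_ofOption, Option.mem_def,
    Option.ite_none_right_eq_some]
  exact ⟨fun ⟨_, t, ht, h, _⟩ => ⟨t, ht, h⟩, fun ⟨t, ht, h⟩ => ⟨_, t, ht, h, rfl⟩⟩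

lemma prefixFreeSet_dom_decoder : PrefixFreeSet (decoder c).Dom := by
  apply prefixFreeSet_of_leadingZeros
  · intro y hy
    obtain ⟨t, -, hlen⟩ := dom_decoder.mp hy
    omega
  · intro y hy y' hy' hlz
    obtain ⟨t, ht, hlen⟩ := dom_decoder.mp hy
    obtain ⟨t', ht', hlen'⟩ := dom_decoder.mp hy'
    rw [← hlz] at ht'
    rw [hlen, hlen', Part.mem_unique ht ht', hlz]

open Primrec in
lemma partrec_decoder : Partrec (decoder c) := by
  have hstage : Primrec (stage c : ℕ → List (ℕ × Fin 2)) := primrec_stage c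
  have hknown : Primrec (knownDigits c) :=
    list_map list_range (listLookup.comp (succ.comp snd) (hstage.comp fst)).to₂
  have hpow : Primrec₂ ((· ^ ·) : ℕ → ℕ → ℕ) := Primrec₂.unpaired'.1 Nat.Primrec.pow
  have hfirst : Partrec fun y => firstStage c (2 ^ leadingZeros y) :=
    Partrec.rfind <| Computable₂.partrec₂ <| Primrec₂.to_comp <| PrimrecPred.decide <|
      nat_le.comp (hpow.comp (const 2) (primrec_leadingZeros.comp fst))
        (list_length.comp (hstage.comp snd))
  have hholes : Primrec fun t => (knownDigits c t).countP Option.isNone :=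
    (list_length.comp ((listFilter (p := fun o : Option (Fin 2) => o = none)
      (Primrec.eq.comp Primrec.id (const none))).comp hknown)).of_eq
      fun t => by
        rw [List.countP_eq_length_filter]
        exact congrArg _ (List.filter_congr fun o _ => by cases o <;> rfl)
  have hbody : Primrec fun p : Str 2 × ℕ =>
      if p.1.length = leadingZeros p.1 + 1 + (knownDigits c p.2).countP Option.isNone then
        some (fill (knownDigits c p.2) (p.1.drop (leadingZeros p.1 + 1)))
      else none :=
    Primrec.ite (Primrec.eq.comp (list_length.comp fst)
        (nat_add.comp (succ.comp (primrec_leadingZeros.comp fst)) (hholes.comp snd)))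
      (option_some.comp (primrec₂_fill.comp (hknown.comp snd)
        (list_drop.comp (succ.comp (primrec_leadingZeros.comp fst)) fst)))
      (const none)
  exact hfirst.bind (Computable.ofOption hbody.to_comp).to₂

variable (c) in
def machine : SDMachine 2 := ⟨decoder c, partrec_decoder, prefixFreeSet_dom_decoder⟩

end Machine

section Compression

variable {c : Code} {S : Set (ℕ × Fin 2)} {x : ℕ → Fin 2}

lemma exists_decoder_mem_prefix (hc : ∀ a, a ∈ S ↔ (eval c (encode a)).Dom)
    (hinf : S.Infinite) (hx : ∀ q ∈ S, 1 ≤ q.1 ∧ q.2 = x q.1) (j : ℕ) :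
    ∃ n, 1 ≤ n ∧ ∃ y : Str 2, y.length + 2 ^ j ≤ n + j + 1 ∧
      (List.range n).map (fun i => x (i + 1)) ∈ decoder c y := by
  obtain ⟨t, hfirst, hlarge⟩ : ∃ t, firstStage c (2 ^ j) = Part.some t ∧
      2 ^ j ≤ (stage c t : List (ℕ × Fin 2)).length :=
    have hex := exists_le_length_stage hc hinf (2 ^ j)
    ⟨_, firstStage_eq_find hex, Nat.find_spec hex⟩
  have hS : ∀ q ∈ (stage c t : List (ℕ × Fin 2)), 1 ≤ q.1 ∧ q.2 = x q.1 :=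
    fun q hq => hx q (mem_of_mem_stage hc hq)
  have hfst : ((stage c t).map Prod.fst).Nodup := (nodup_stage c t).map_on fun q hq q' hq' h =>
    Prod.ext h (by rw [(hS q hq).2, (hS q' hq').2, h])
  have hcount : (knownDigits c t).countP Option.isNone + (stage c t).length ≤ t :=
    countP_isNone_pattern_add_length_le hfst fun q hq =>
      ⟨(hS q hq).1, (fst_lt_of_mem_stage hq).le⟩
  have ht : 1 ≤ t := by have := Nat.one_le_two_pow (n := j); omega
  set w := holes (knownDigits c t) ((List.range t).map fun i => x (i + 1))
  have hw : w.length = (knownDigits c t).countP Option.isNone :=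
    length_holes (by simp [knownDigits, pattern])
  have hfill : fill (knownDigits c t) w = (List.range t).map fun i => x (i + 1) :=
    fill_holes (forall₂_pattern fun q hq => (hS q hq).2)
  refine ⟨t, ht, List.replicate j 0 ++ 1 :: w, by simp only [List.length_append,
    List.length_replicate, List.length_cons, hw]; omega, ?_⟩
  simp [decoder, leadingZeros_replicate_append, hfirst, List.drop_append, hw, hfill, add_assoc,
    add_comm 1]

end Compression

lemma Hm_le_length {Q : ℕ} {T : SDMachine Q} {x y : Str Q} (h : x ∈ T.f y) :
    Hm T x ≤ y.length :=
  sInf_le ⟨y, h, rfl⟩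

theorem exists_deltaC_add_two_pow_le {U : SDMachine 2} (hU : IsUniversal U)
    {S : Set (ℕ × Fin 2)} {x : ℕ → Fin 2} (hS : CEset S) (hinf : S.Infinite)
    (hx : ∀ q ∈ S, 1 ≤ q.1 ∧ q.2 = x q.1) :
    ∃ C : ℕ, ∀ j : ℕ, ∃ n, 1 ≤ n ∧
      deltaC U ((List.range n).map fun i => x (i + 1)) + 2 ^ j ≤ j + C := by
  obtain ⟨c, hc⟩ := hS.exists_code
  obtain ⟨ε, -, hε⟩ := hU (machine c)
  refine ⟨ε + 1, fun j => ?_⟩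
  obtain ⟨n, hn, y, hy, hmem⟩ := exists_decoder_mem_prefix hc hinf hx j
  have hUy : (Hm U ((List.range n).map fun i => x (i + 1))).toNat ≤ y.length + ε :=
    ENat.toNat_le_of_le_natCast <| (hε _).trans <| by
      push_cast
      gcongr
      exact Hm_le_length (T := machine c) hmem
  refine ⟨n, hn, ?_⟩
  have : ((y.length + 2 ^ j : ℕ) : ℤ) ≤ n + j + 1 := by exact_mod_cast hy
  rw [deltaC, List.length_map, List.length_range]
  push_cast at this ⊢
  linarith

end ScatteredDigits

/-- If an infinite binary sequence `x₁x₂⋯` satisfies Chaitin's randomness criterion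
(`δ₂(x₁⋯x_n) ≥ −μ` for all `n ≥ 1`, for some constant `μ > 0`), then there is no strictly
increasing function `F` on positive integers such that `{(F(i), x_{F(i)}) : i ≥ 1}` is c.e. -/
theorem random_no_ce_scattered_digits (U2 : SDMachine 2) (hU2 : IsUniversal U2)
    (x : ℕ → Fin 2)
    (hrand : ∃ μ : ℕ, 0 < μ ∧ ∀ n, 1 ≤ n →
      -(μ : ℤ) ≤ deltaC U2 ((List.range n).map fun j => x (j + 1))) :
    ¬ ∃ F : ℕ → ℕ, (∀ i, 1 ≤ i → 1 ≤ F i) ∧ (∀ i j, 1 ≤ i → i < j → F i < F j) ∧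
        CEset {p : ℕ × Fin 2 | ∃ i, 1 ≤ i ∧ p.1 = F i ∧ p.2 = x (F i)} := by
  rintro ⟨F, hF1, hFmono, hS⟩
  obtain ⟨μ, -, hμ⟩ := hrand
  have hmono : StrictMono fun i => F (i + 1) :=
    strictMono_nat_of_lt_succ fun i => hFmono (i + 1) (i + 2) (by omega) (by omega)
  have hinf : {p : ℕ × Fin 2 | ∃ i, 1 ≤ i ∧ p.1 = F i ∧ p.2 = x (F i)}.Infinite :=
    Set.infinite_of_injective_forall_mem (f := fun i => (F (i + 1), x (F (i + 1))))
      (fun i k h => hmono.injective (congrArg Prod.fst h)) fun i => ⟨i + 1, by omega, rfl, rfl⟩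
  obtain ⟨C, hC⟩ := ScatteredDigits.exists_deltaC_add_two_pow_le hU2 hS hinf
    fun q ⟨i, hi, h1, h2⟩ => ⟨h1 ▸ hF1 i hi, h1 ▸ h2⟩
  obtain ⟨n, hn, hδ⟩ := hC (μ + C + 2)
  have hpow : ((μ + C + 1 : ℕ) : ℤ) < 2 ^ (μ + C + 1) := by exact_mod_cast Nat.lt_two_pow_self
  have hpow_succ : (2 : ℤ) ^ (μ + C + 2) = 2 * 2 ^ (μ + C + 1) := pow_succ' _ _
  push_cast at hδ hpow
  linarith [hμ n hn]
end
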